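/- arXiv:2304.08720 — 7 statements merged into one kernel-verified Lean document; each statement's English description precedes it below -/
import Mathlib

section
/- Let Ω ∈ 𝒮², let c > 0 be a real number, and let (m₁,m₂) ∈ ℤ² \ (ℤ_{≤0})². Then the inclusion map of ∂Ω(c:m₁,m₂) into Ū_Ω(c:m₁,m₂) is a homotopy equivalence of topological spaces; explicitly, the map r sending x ∈ Ū_Ω(c:m₁,m₂) to ρ(x)·x, where ρ(x) is the unique positive real number with ρ(x)·x ∈ ∂Ω, is continuous, takes values in ∂Ω(c:m₁,m₂), and is a homotopy inverse of the inclusion. -/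
open Set Real

noncomputable section

/-- Points of the plane `ℝ²`. -/
abbrev Pt : Type := ℝ × ℝ

/-- The unit quarter circle `Σ² = {v ∈ (ℝ_{≥0})² : |v| = 1}`. -/
def Sigma2 : Set Pt := {v | 0 ≤ v.1 ∧ 0 ≤ v.2 ∧ v.1 ^ 2 + v.2 ^ 2 = 1}

/-- `Ω ∈ 𝒮²`, witnessed by the radial function `r` (a positive function on `Σ²`,
smooth in the sense that it is `C^∞` on `Σ²` as a subset of `ℝ²`). -/
def IsToricBase (Ω : Set Pt) (r : Pt → ℝ) : Prop :=
  ContDiffOn ℝ (⊤ : ℕ∞) r Sigma2 ∧ (∀ z ∈ Sigma2, 0 < r z) ∧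
    Ω = {p | ∃ z ∈ Sigma2, ∃ t : ℝ, 0 ≤ t ∧ t ≤ r z ∧ p = t • z}

/-- The open positive quadrant `(ℝ_{>0})²`. -/
def posQuad : Set Pt := {p | 0 < p.1 ∧ 0 < p.2}

/-- The closed nonnegative quadrant `(ℝ_{≥0})²`. -/
def nonnegQuad : Set Pt := {p | 0 ≤ p.1 ∧ 0 ≤ p.2}

/-- `U_Ω := (ℝ_{>0})² \ Ω`. -/
def UStar (Ω : Set Pt) : Set Pt := posQuad \ Ω

/-- `Ū_Ω`, the closure of `U_Ω` in `(ℝ_{≥0})²`. -/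
def UBar (Ω : Set Pt) : Set Pt := closure (UStar Ω) ∩ nonnegQuad

/-- `A_{m₁,m₂}(y₁,y₂) = m₁ y₁ + m₂ y₂`. -/
def Afun (m₁ m₂ : ℤ) (p : Pt) : ℝ := m₁ * p.1 + m₂ * p.2

/-- The curve `γ(θ) = ρ_Ω(θ)·(cos θ, sin θ)` parametrizing `∂Ω`. -/
def gammaCurve (r : Pt → ℝ) (θ : ℝ) : Pt :=
  r (Real.cos θ, Real.sin θ) • ((Real.cos θ, Real.sin θ) : Pt)

/-- `∂Ω := {ρ_Ω(θ)·(cos θ, sin θ) : θ ∈ [0,π/2]}`. -/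
def bdryOmega (r : Pt → ℝ) : Set Pt := gammaCurve r '' Icc 0 (π / 2)

/-- `∂₊Ω := ∂Ω ∪ {(t,0) : t ≥ ρ_Ω(0)} ∪ {(0,t) : t ≥ ρ_Ω(π/2)}`. -/
def bdryPlusOmega (r : Pt → ℝ) : Set Pt :=
  bdryOmega r ∪ {p | p.2 = 0 ∧ r (1, 0) ≤ p.1} ∪ {p | p.1 = 0 ∧ r (0, 1) ≤ p.2}

/-- The action spectrum `spec(Ω)`. -/
def spec (r : Pt → ℝ) : Set ℝ :=
  {x | ∃ m : ℤ, 1 ≤ m ∧ x = m * r (1, 0)} ∪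
  {x | ∃ m : ℤ, 1 ≤ m ∧ x = m * r (0, 1)} ∪
  {x | ∃ m₁ m₂ : ℤ, ¬(m₁ ≤ 0 ∧ m₂ ≤ 0) ∧ ∃ θ ∈ Icc (0 : ℝ) (π / 2),
    deriv (fun t => Afun m₁ m₂ (gammaCurve r t)) θ = 0 ∧
    0 < Afun m₁ m₂ (gammaCurve r θ) ∧ x = Afun m₁ m₂ (gammaCurve r θ)}
-- helpers
def nrm (p : Pt) : ℝ := Real.sqrt (p.1 ^ 2 + p.2 ^ 2)
def pdir (p : Pt) : Pt := (nrm p)⁻¹ • p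

lemma nrm_nonneg (p : Pt) : 0 ≤ nrm p := Real.sqrt_nonneg _

lemma nrm_pos {p : Pt} (h : p ≠ 0) : 0 < nrm p := by
  apply Real.sqrt_pos.2
  have h' : ¬(p.1 = 0 ∧ p.2 = 0) := fun hh => h (Prod.ext hh.1 hh.2)
  rcases not_and_or.1 h' with h1 | h1 <;> positivity

lemma smul_fst (t : ℝ) (p : Pt) : (t • p).1 = t * p.1 := rfl
lemma smul_snd (t : ℝ) (p : Pt) : (t • p).2 = t * p.2 := rfl

lemma nrm_smul {t : ℝ} (ht : 0 ≤ t) (p : Pt) : nrm (t • p) = t * nrm p := by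
  unfold nrm
  rw [smul_fst, smul_snd]
  rw [show (t * p.1) ^ 2 + (t * p.2) ^ 2 = t ^ 2 * (p.1 ^ 2 + p.2 ^ 2) by ring,
    Real.sqrt_mul (sq_nonneg t), Real.sqrt_sq ht]

lemma pdir_smul {t : ℝ} (ht : t ≠ 0) (htn : 0 ≤ t) (p : Pt) : pdir (t • p) = pdir p := by
  unfold pdir
  rw [nrm_smul htn, smul_smul, mul_inv, mul_comm t⁻¹, mul_assoc, inv_mul_cancel₀ ht, mul_one]

lemma nrm_sigma {z : Pt} (hz : z ∈ Sigma2) : nrm z = 1 := by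
  unfold nrm; rw [hz.2.2]; exact Real.sqrt_one

lemma pdir_mem {p : Pt} (h1 : p ∈ nonnegQuad) (h2 : p ≠ 0) : pdir p ∈ Sigma2 := by
  have hn := nrm_pos h2
  refine ⟨by rw [pdir, smul_fst]; exact mul_nonneg (by positivity) h1.1, by rw [pdir, smul_snd]; exact mul_nonneg (by positivity) h1.2, ?_⟩
  rw [pdir, smul_fst, smul_snd]
  have : (nrm p)⁻¹ ^ 2 * (p.1 ^ 2 + p.2 ^ 2) = 1 := by
    rw [show (p.1 ^ 2 + p.2 ^ 2) = nrm p ^ 2 by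
      rw [nrm, Real.sq_sqrt]; positivity]
    field_simp
  linarith [this, sq_nonneg ((nrm p)⁻¹ * p.1)]

lemma nrm_smul_pdir {p : Pt} (h2 : p ≠ 0) : nrm p • pdir p = p := by
  rw [pdir, smul_smul, mul_inv_cancel₀ (nrm_pos h2).ne', one_smul]

lemma pdir_sigma {z : Pt} (hz : z ∈ Sigma2) : pdir z = z := by
  rw [pdir, nrm_sigma hz, inv_one, one_smul]

lemma sigma2_nonneg {z : Pt} (hz : z ∈ Sigma2) : z ∈ nonnegQuad := ⟨hz.1, hz.2.1⟩

lemma sigma2_ne_zero {z : Pt} (hz : z ∈ Sigma2) : z ≠ 0 := by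
  intro h; rw [h] at hz; simp [Sigma2] at hz

lemma mem_bdry_iff {r : Pt → ℝ} {q : Pt} : q ∈ bdryOmega r ↔ ∃ z ∈ Sigma2, q = r z • z := by
  constructor
  · rintro ⟨θ, hθ, rfl⟩
    refine ⟨(Real.cos θ, Real.sin θ), ⟨?_, ?_, ?_⟩, rfl⟩
    · exact Real.cos_nonneg_of_mem_Icc ⟨by linarith [hθ.1, Real.pi_pos], hθ.2⟩
    · exact Real.sin_nonneg_of_nonneg_of_le_pi hθ.1 (by linarith [hθ.2, Real.pi_pos])
    · have := Real.sin_sq_add_cos_sq θ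
      simp only []
      linarith
  · rintro ⟨z, hz, rfl⟩
    refine ⟨Real.arccos z.1, ⟨Real.arccos_nonneg _, Real.arccos_le_pi_div_two.2 hz.1⟩, ?_⟩
    have h1 : z.1 ≤ 1 := by nlinarith [hz.2.2, sq_nonneg z.2]
    have hcos : Real.cos (Real.arccos z.1) = z.1 := Real.cos_arccos (by linarith [hz.1]) h1
    have hsin : Real.sin (Real.arccos z.1) = z.2 := by
      rw [Real.sin_arccos]
      have : 1 - z.1 ^ 2 = z.2 ^ 2 := by linarith [hz.2.2]
      rw [this, Real.sqrt_sq hz.2.1]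
    unfold gammaCurve
    rw [hcos, hsin]
-- mem Omega characterization
variable {Ω : Set Pt} {r : Pt → ℝ}

lemma mem_Omega_iff (hΩ : IsToricBase Ω r) {p : Pt} (hp : p ≠ 0) :
    p ∈ Ω ↔ p ∈ nonnegQuad ∧ nrm p ≤ r (pdir p) := by
  rw [hΩ.2.2]
  constructor
  · rintro ⟨z, hz, t, ht0, htr, rfl⟩
    have ht : t ≠ 0 := by rintro rfl; simp at hp
    have htpos : 0 < t := lt_of_le_of_ne ht0 (Ne.symm ht)
    constructor
    · exact ⟨mul_nonneg ht0 hz.1, mul_nonneg ht0 hz.2.1⟩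
    · rw [nrm_smul ht0, nrm_sigma hz, mul_one, pdir_smul ht ht0, pdir_sigma hz]
      exact htr
  · rintro ⟨h1, h2⟩
    exact ⟨pdir p, pdir_mem h1 hp, nrm p, nrm_nonneg p, h2, (nrm_smul_pdir hp).symm⟩

lemma not_mem_Omega (hΩ : IsToricBase Ω r) {p : Pt} (h1 : p ∈ nonnegQuad)
    (h2 : p ≠ 0) (h3 : r (pdir p) < nrm p) : p ∉ Ω := by
  intro hmem
  exact absurd ((mem_Omega_iff hΩ h2).1 hmem).2 (not_le.2 h3)

lemma sigma2_isCompact : IsCompact Sigma2 := by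
  apply Metric.isCompact_of_isClosed_isBounded
  · have : Sigma2 = {v : Pt | 0 ≤ v.1} ∩ {v : Pt | 0 ≤ v.2} ∩ {v : Pt | v.1 ^ 2 + v.2 ^ 2 = 1} := by
      ext v; simp [Sigma2]; tauto
    rw [this]
    refine (IsClosed.inter ?_ ?_).inter ?_
    · exact isClosed_le continuous_const continuous_fst
    · exact isClosed_le continuous_const continuous_snd
    · exact isClosed_eq (by continuity) continuous_const
  · apply Bornology.IsBounded.subset (Metric.isBounded_closedBall (x := (0:Pt)) (r := 1))
    intro z hz
    rw [Metric.mem_closedBall, dist_zero_right, Prod.norm_def]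
    have h1 : z.1 ≤ 1 := by nlinarith [hz.2.2, sq_nonneg z.2]
    have h2 : z.2 ≤ 1 := by nlinarith [hz.2.2, sq_nonneg z.1]
    simp only [Real.norm_eq_abs, abs_of_nonneg hz.1, abs_of_nonneg hz.2.1]
    exact max_le h1 h2

lemma exists_rmin (hΩ : IsToricBase Ω r) : ∃ ε > 0, ∀ z ∈ Sigma2, ε ≤ r z := by
  obtain ⟨z0, hz0, hmin⟩ := sigma2_isCompact.exists_isMinOn
    ⟨(1, 0), by norm_num [Sigma2]⟩ hΩ.1.continuousOn
  exact ⟨r z0, hΩ.2.1 z0 hz0, fun z hz => hmin hz⟩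

lemma continuous_nrm : Continuous nrm := by
  apply Real.continuous_sqrt.comp; continuity

lemma continuousOn_pdir : ContinuousOn pdir {p : Pt | p ≠ 0} := by
  apply ContinuousOn.fun_smul (f := fun p : Pt => (nrm p)⁻¹) (g := fun p => p)
  · exact (continuous_nrm.continuousOn).inv₀ fun p hp => (nrm_pos hp).ne'
  · exact continuousOn_id

lemma nrm_le_add {x y : Pt} (hx : x ∈ nonnegQuad) (hy : y ∈ nonnegQuad) :
    nrm x ≤ nrm (x + y) := by
  apply Real.sqrt_le_sqrt
  have : (x + y).1 = x.1 + y.1 := rfl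
  have : (x + y).2 = x.2 + y.2 := rfl
  show x.1 ^ 2 + x.2 ^ 2 ≤ (x.1 + y.1) ^ 2 + (x.2 + y.2) ^ 2
  nlinarith [hx.1, hx.2, hy.1, hy.2, sq_nonneg y.1, sq_nonneg y.2,
    mul_nonneg hx.1 hy.1, mul_nonneg hx.2 hy.2]
lemma nrm_zero : nrm (0 : Pt) = 0 := by simp [nrm]

lemma isClosed_nonnegQuad : IsClosed nonnegQuad := by
  have : nonnegQuad = {p : Pt | 0 ≤ p.1} ∩ {p : Pt | 0 ≤ p.2} := rfl
  rw [this]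
  exact (isClosed_le continuous_const continuous_fst).inter
    (isClosed_le continuous_const continuous_snd)

lemma ubar_sub (hΩ : IsToricBase Ω r) :
    UBar Ω ⊆ {p | p ∈ nonnegQuad ∧ p ≠ 0 ∧ r (pdir p) ≤ nrm p} := by
  obtain ⟨ε, hε, hεr⟩ := exists_rmin hΩ
  set C : Set Pt := {q | ε ≤ nrm q} ∩ nonnegQuad with hC
  have hCne : ∀ q ∈ C, q ≠ 0 := by
    rintro q hq rfl
    rw [mem_inter_iff, mem_setOf_eq, nrm_zero] at hq
    linarith [hq.1]
  have hCclosed : IsClosed C :=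
    (isClosed_le continuous_const continuous_nrm).inter isClosed_nonnegQuad
  have hg : ContinuousOn (fun q => nrm q - r (pdir q)) C := by
    apply ContinuousOn.sub continuous_nrm.continuousOn
    exact hΩ.1.continuousOn.comp (continuousOn_pdir.mono fun q hq => hCne q hq)
      (fun q hq => pdir_mem hq.2 (hCne q hq))
  set T : Set Pt := C ∩ (fun q => nrm q - r (pdir q)) ⁻¹' (Ici 0) with hT
  have hTclosed : IsClosed T := hg.preimage_isClosed_of_isClosed hCclosed isClosed_Ici
  have hST : UStar Ω ⊆ T := by
    rintro q ⟨hqpos, hqΩ⟩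
    have hqn : q ∈ nonnegQuad := ⟨hqpos.1.le, hqpos.2.le⟩
    have hqne : q ≠ 0 := by
      rintro rfl; exact lt_irrefl 0 hqpos.1
    have hlt : r (pdir q) < nrm q := by
      by_contra h
      exact hqΩ ((mem_Omega_iff hΩ hqne).2 ⟨hqn, le_of_not_gt h⟩)
    have hεq : ε ≤ nrm q := le_trans (hεr _ (pdir_mem hqn hqne)) hlt.le
    exact ⟨⟨hεq, hqn⟩, by simp only [mem_preimage, mem_Ici]; linarith⟩
  intro p hp
  have hpT : p ∈ T := closure_minimal hST hTclosed hp.1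
  have hpne : p ≠ 0 := hCne p hpT.1
  refine ⟨hp.2, hpne, ?_⟩
  have := hpT.2
  simp only [mem_preimage, mem_Ici] at this
  linarith

lemma norm_one_one : ‖((1, 1) : Pt)‖ = 1 := by
  rw [Prod.norm_def]; norm_num

lemma sub_ubar (hΩ : IsToricBase Ω r) (p : Pt) (h1 : p ∈ nonnegQuad) (h2 : p ≠ 0)
    (h3 : r (pdir p) ≤ nrm p) : p ∈ UBar Ω := by
  refine ⟨?_, h1⟩
  rw [Metric.mem_closure_iff]
  intro δ hδ
  have hnp := nrm_pos h2
  set s : ℝ := min 1 (δ / (2 * (‖p‖ + 1))) with hs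
  have hpn : (0:ℝ) < ‖p‖ + 1 := by positivity
  have hs0 : 0 < s := lt_min one_pos (by positivity)
  have hs1 : s ≤ 1 := min_le_left _ _
  have hsp : s * ‖p‖ < δ / 2 := by
    have h4 : s ≤ δ / (2 * (‖p‖ + 1)) := min_le_right _ _
    have h5 : s * ‖p‖ ≤ δ / (2 * (‖p‖ + 1)) * ‖p‖ :=
      mul_le_mul_of_nonneg_right h4 (norm_nonneg p)
    have h6 : δ / (2 * (‖p‖ + 1)) * ‖p‖ < δ / 2 := by
      rw [div_mul_eq_mul_div, div_lt_div_iff₀ (by positivity) (by norm_num)]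
      nlinarith [norm_nonneg p]
    linarith
  set q : ℝ → Pt := fun b => (1 + s) • p + b • ((1, 1) : Pt) with hq
  have hq0 : q 0 = (1 + s) • p := by simp [hq]
  have hq0ne : q 0 ≠ 0 := by
    rw [hq0]; intro h
    exact h2 (by simpa [smul_eq_zero, (by linarith : (1:ℝ) + s ≠ 0)] using h)
  have hqnonneg : ∀ b, 0 ≤ b → q b ∈ nonnegQuad := by
    intro b hb
    constructor
    · show 0 ≤ (1 + s) * p.1 + b * 1
      nlinarith [h1.1]
    · show 0 ≤ (1 + s) * p.2 + b * 1
      nlinarith [h1.2]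
  have hqnrm : ∀ b, 0 ≤ b → (1 + s) * nrm p ≤ nrm (q b) := by
    intro b hb
    have := nrm_le_add (x := (1 + s) • p) (y := b • ((1,1) : Pt))
      ⟨by show 0 ≤ (1+s) * p.1; nlinarith [h1.1], by show 0 ≤ (1+s) * p.2; nlinarith [h1.2]⟩
      ⟨by show 0 ≤ b * 1; linarith, by show 0 ≤ b * 1; linarith⟩
    rwa [nrm_smul (by linarith) p] at this
  have hqne : ∀ b, 0 ≤ b → q b ≠ 0 := by
    intro b hb h0
    have := hqnrm b hb
    rw [h0, nrm_zero] at this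
    nlinarith
  have hqcont : Continuous q := by
    apply Continuous.add continuous_const
    exact continuous_id.smul continuous_const
  have hpdirq0 : pdir (q 0) = pdir p := by
    rw [hq0, pdir_smul (by linarith) (by linarith)]
  have hcont : ContinuousWithinAt (fun b => r (pdir (q b))) (Ici 0) 0 := by
    have hA : ContinuousWithinAt r Sigma2 (pdir (q 0)) :=
      hΩ.1.continuousOn _ (pdir_mem (hqnonneg 0 le_rfl) hq0ne)
    have hpd : ContinuousAt pdir (q 0) :=
      continuousOn_pdir.continuousAt (by
        rw [show {p : Pt | p ≠ 0} = {(0:Pt)}ᶜ from rfl]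
        exact (isOpen_compl_singleton).mem_nhds hq0ne)
    have hB : ContinuousWithinAt (fun b => pdir (q b)) (Ici 0) 0 :=
      (hpd.comp hqcont.continuousAt).continuousWithinAt
    have hmaps : MapsTo (fun b => pdir (q b)) (Ici (0:ℝ)) Sigma2 :=
      fun b hb => pdir_mem (hqnonneg b hb) (hqne b hb)
    exact ContinuousWithinAt.comp (g := r) (f := fun b => pdir (q b)) hA hB hmaps
  have htend : Filter.Tendsto (fun b => r (pdir (q b))) (nhdsWithin 0 (Ioi 0))
      (nhds (r (pdir (q 0)))) :=
    hcont.mono_left (nhdsWithin_mono _ Ioi_subset_Ici_self)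
  have hev1 : ∀ᶠ b in nhdsWithin 0 (Ioi 0),
      dist (r (pdir (q b))) (r (pdir (q 0))) < s * nrm p :=
    htend (Metric.ball_mem_nhds _ (by positivity))
  have hev2 : Ioo (0:ℝ) (δ/2) ∈ nhdsWithin (0:ℝ) (Ioi 0) :=
    Ioo_mem_nhdsGT_of_mem ⟨le_refl 0, half_pos hδ⟩
  obtain ⟨b, hb1, hb2⟩ := (hev1.and (Filter.eventually_of_mem hev2 (fun x hx => hx))).exists
  have hb0 : 0 < b := hb2.1
  refine ⟨q b, ⟨⟨?_, ?_⟩, ?_⟩, ?_⟩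
  · show 0 < (1 + s) * p.1 + b * 1
    nlinarith [h1.1]
  · show 0 < (1 + s) * p.2 + b * 1
    nlinarith [h1.2]
  · apply not_mem_Omega hΩ (hqnonneg b hb0.le) (hqne b hb0.le)
    have hdist : |r (pdir (q b)) - r (pdir p)| < s * nrm p := by
      rw [← hpdirq0]
      rw [Real.dist_eq] at hb1
      exact hb1
    have h7 : r (pdir (q b)) < r (pdir p) + s * nrm p := by
      cases abs_lt.1 hdist with
      | intro hl hr => linarith
    calc r (pdir (q b)) < r (pdir p) + s * nrm p := h7
      _ ≤ nrm p + s * nrm p := by linarith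
      _ = (1 + s) * nrm p := by ring
      _ ≤ nrm (q b) := hqnrm b hb0.le
  · have : p - q b = -(s • p + b • ((1,1) : Pt)) := by
      rw [hq]; module
    rw [dist_eq_norm, this, norm_neg]
    calc ‖s • p + b • ((1,1) : Pt)‖ ≤ ‖s • p‖ + ‖b • ((1,1) : Pt)‖ := norm_add_le _ _
      _ = s * ‖p‖ + b * 1 := by
          rw [norm_smul, norm_smul, Real.norm_eq_abs, Real.norm_eq_abs,
            abs_of_pos hs0, abs_of_pos hb0, norm_one_one]
      _ < δ / 2 + δ / 2 := by
          have := hb2.2; linarith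
      _ = δ := by ring
lemma afun_smul (m₁ m₂ : ℤ) (t : ℝ) (p : Pt) :
    Afun m₁ m₂ (t • p) = t * Afun m₁ m₂ p := by
  show (m₁ : ℝ) * (t * p.1) + m₂ * (t * p.2) = t * (m₁ * p.1 + m₂ * p.2)
  ring

lemma continuousOn_rho (hΩ : IsToricBase Ω r) :
    ContinuousOn (fun p => r (pdir p) * (nrm p)⁻¹) {p : Pt | p ∈ nonnegQuad ∧ p ≠ 0} := by
  apply ContinuousOn.mul
  · exact hΩ.1.continuousOn.comp (continuousOn_pdir.mono fun p hp => hp.2)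
      (fun p hp => pdir_mem hp.1 hp.2)
  · exact (continuous_nrm.continuousOn).inv₀ fun p hp => (nrm_pos hp.2).ne'


/-- the inclusion `∂Ω(c:m₁,m₂) ↪ Ū_Ω(c:m₁,m₂)` is a homotopy equivalence,
with homotopy inverse the (continuous) map `x ↦ ρ(x)·x`, where `ρ(x)` is the unique
positive real with `ρ(x)·x ∈ ∂Ω`. -/
theorem stmt0 (Ω : Set Pt) (r : Pt → ℝ) (hΩ : IsToricBase Ω r) (c : ℝ) (hc : 0 < c)
    (m₁ m₂ : ℤ) (hm : ¬(m₁ ≤ 0 ∧ m₂ ≤ 0))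
    (hsub : {p ∈ bdryOmega r | Afun m₁ m₂ p < c} ⊆ {p ∈ UBar Ω | Afun m₁ m₂ p < c}) :
    ∃ ρ : Pt → ℝ,
      (∀ p ∈ {p ∈ UBar Ω | Afun m₁ m₂ p < c},
        0 < ρ p ∧ ρ p • p ∈ bdryOmega r ∧
          ∀ t : ℝ, 0 < t → t • p ∈ bdryOmega r → t = ρ p) ∧
      ∃ rmap : C(↥{p ∈ UBar Ω | Afun m₁ m₂ p < c}, ↥{p ∈ bdryOmega r | Afun m₁ m₂ p < c}),
        (∀ x : ↥{p ∈ UBar Ω | Afun m₁ m₂ p < c}, (rmap x : Pt) = ρ (x : Pt) • (x : Pt)) ∧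
        (rmap.comp ⟨Set.inclusion hsub, continuous_inclusion hsub⟩).Homotopic
          (ContinuousMap.id _) ∧
        ((⟨Set.inclusion hsub, continuous_inclusion hsub⟩ :
            C(↥{p ∈ bdryOmega r | Afun m₁ m₂ p < c},
              ↥{p ∈ UBar Ω | Afun m₁ m₂ p < c})).comp rmap).Homotopic
          (ContinuousMap.id _) := by
  classical
  set ρ : Pt → ℝ := fun p => r (pdir p) * (nrm p)⁻¹ with hρdef
  have hW : ∀ p ∈ UBar Ω, p ∈ nonnegQuad ∧ p ≠ 0 ∧ r (pdir p) ≤ nrm p :=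
    fun p hp => ubar_sub hΩ hp
  have hρpos : ∀ p ∈ UBar Ω, 0 < ρ p := by
    intro p hp
    obtain ⟨h1, h2, h3⟩ := hW p hp
    exact mul_pos (hΩ.2.1 _ (pdir_mem h1 h2)) (inv_pos.2 (nrm_pos h2))
  have hρle : ∀ p ∈ UBar Ω, ρ p ≤ 1 := by
    intro p hp
    obtain ⟨h1, h2, h3⟩ := hW p hp
    rw [hρdef]
    have hn := nrm_pos h2
    calc r (pdir p) * (nrm p)⁻¹ ≤ nrm p * (nrm p)⁻¹ :=
          mul_le_mul_of_nonneg_right h3 (by positivity)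
      _ = 1 := mul_inv_cancel₀ hn.ne'
  have hρnrm : ∀ p ∈ UBar Ω, ρ p * nrm p = r (pdir p) := by
    intro p hp
    obtain ⟨h1, h2, h3⟩ := hW p hp
    have hn := nrm_pos h2
    rw [hρdef]
    field_simp
  have hbd : ∀ p ∈ UBar Ω, ρ p • p ∈ bdryOmega r := by
    intro p hp
    obtain ⟨h1, h2, h3⟩ := hW p hp
    refine mem_bdry_iff.2 ⟨pdir p, pdir_mem h1 h2, ?_⟩
    show (r (pdir p) * (nrm p)⁻¹) • p = r (pdir p) • pdir p
    rw [pdir, smul_smul]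
  have huniq : ∀ p ∈ UBar Ω, ∀ t : ℝ, 0 < t → t • p ∈ bdryOmega r → t = ρ p := by
    intro p hp t ht hmem
    obtain ⟨h1, h2, h3⟩ := hW p hp
    obtain ⟨z, hz, heq⟩ := mem_bdry_iff.1 hmem
    have hrz := hΩ.2.1 z hz
    have hd : pdir p = z := by
      have := congrArg pdir heq
      rwa [pdir_smul ht.ne' ht.le, pdir_smul hrz.ne' hrz.le, pdir_sigma hz] at this
    have hn : t * nrm p = r z := by
      have := congrArg nrm heq
      rwa [nrm_smul ht.le, nrm_smul hrz.le, nrm_sigma hz, mul_one] at this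
    have hnp := nrm_pos h2
    rw [hρdef]
    rw [← hd] at hn
    field_simp [← hn]
    exact hn
  have hsmulmem : ∀ p ∈ UBar Ω, ∀ μ : ℝ, ρ p ≤ μ → μ ≤ 1 → μ • p ∈ UBar Ω := by
    intro p hp μ hμ1 hμ2
    obtain ⟨h1, h2, h3⟩ := hW p hp
    have hμ0 : 0 < μ := lt_of_lt_of_le (hρpos p hp) hμ1
    apply sub_ubar hΩ
    · exact ⟨mul_nonneg hμ0.le h1.1, mul_nonneg hμ0.le h1.2⟩
    · exact smul_ne_zero hμ0.ne' h2
    · rw [pdir_smul hμ0.ne' hμ0.le, nrm_smul hμ0.le]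
      calc r (pdir p) = ρ p * nrm p := (hρnrm p hp).symm
        _ ≤ μ * nrm p := mul_le_mul_of_nonneg_right hμ1 (nrm_nonneg p)
  have hAlt : ∀ (μ : ℝ), 0 < μ → μ ≤ 1 → ∀ p : Pt, Afun m₁ m₂ p < c →
      Afun m₁ m₂ (μ • p) < c := by
    intro μ hμ0 hμ1 p hA
    rw [afun_smul]
    rcases le_or_gt (Afun m₁ m₂ p) 0 with h | h
    · calc μ * Afun m₁ m₂ p ≤ 0 := mul_nonpos_of_nonneg_of_nonpos hμ0.le h
        _ < c := hc
    · calc μ * Afun m₁ m₂ p ≤ 1 * Afun m₁ m₂ p :=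
          mul_le_mul_of_nonneg_right hμ1 h.le
        _ = Afun m₁ m₂ p := one_mul _
        _ < c := hA
  refine ⟨ρ, fun p hp => ⟨hρpos p hp.1, hbd p hp.1, huniq p hp.1⟩, ?_⟩
  have hρKcont : Continuous fun x : ↥{p ∈ UBar Ω | Afun m₁ m₂ p < c} => ρ (x : Pt) := by
    apply (continuousOn_rho hΩ).comp_continuous continuous_subtype_val
    intro x
    exact ⟨(hW _ x.2.1).1, (hW _ x.2.1).2.1⟩
  have hmemB : ∀ x : ↥{p ∈ UBar Ω | Afun m₁ m₂ p < c},
      ρ (x : Pt) • (x : Pt) ∈ {p ∈ bdryOmega r | Afun m₁ m₂ p < c} := by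
    intro x
    exact ⟨hbd _ x.2.1, hAlt _ (hρpos _ x.2.1) (hρle _ x.2.1) _ x.2.2⟩
  set rmap : C(↥{p ∈ UBar Ω | Afun m₁ m₂ p < c}, ↥{p ∈ bdryOmega r | Afun m₁ m₂ p < c}) :=
    ⟨fun x => ⟨ρ (x : Pt) • (x : Pt), hmemB x⟩,
      (hρKcont.smul continuous_subtype_val).subtype_mk _⟩ with hrmap
  refine ⟨rmap, fun x => rfl, ?_, ?_⟩
  · -- rmap ∘ incl = id on boundary part
    have heq : rmap.comp ⟨Set.inclusion hsub, continuous_inclusion hsub⟩ =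
        ContinuousMap.id _ := by
      apply ContinuousMap.ext
      intro x
      apply Subtype.ext
      show ρ (x : Pt) • (x : Pt) = (x : Pt)
      obtain ⟨z, hz, hxz⟩ := mem_bdry_iff.1 x.2.1
      have hrz := hΩ.2.1 z hz
      have hρ1 : ρ (x : Pt) = 1 := by
        show r (pdir (x:Pt)) * (nrm (x:Pt))⁻¹ = 1
        rw [hxz, pdir_smul hrz.ne' hrz.le, pdir_sigma hz,
          nrm_smul hrz.le, nrm_sigma hz, mul_one, mul_inv_cancel₀ hrz.ne']
      rw [hρ1, one_smul]
    rw [heq]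
  · -- straight-line homotopy
    refine ⟨?_⟩
    refine ⟨⟨fun sx => ⟨((sx.1 : ℝ) + (1 - (sx.1 : ℝ)) * ρ (sx.2 : Pt)) • (sx.2 : Pt), ?_⟩, ?_⟩, ?_, ?_⟩
    · -- membership
      obtain ⟨s, x⟩ := sx
      have hs0 : (0:ℝ) ≤ s := s.2.1
      have hs1 : (s:ℝ) ≤ 1 := s.2.2
      have hxm := x.2.1
      have hρp := hρpos _ hxm
      have hρl := hρle _ hxm
      set μ : ℝ := (s : ℝ) + (1 - (s : ℝ)) * ρ (x : Pt) with hμ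
      have hμρ : ρ (x : Pt) ≤ μ := by nlinarith
      have hμ1 : μ ≤ 1 := by nlinarith
      have hμ0 : 0 < μ := lt_of_lt_of_le hρp hμρ
      exact ⟨hsmulmem _ hxm μ hμρ hμ1, hAlt μ hμ0 hμ1 _ x.2.2⟩
    · -- continuity
      apply Continuous.subtype_mk
      apply Continuous.fun_smul
      · apply Continuous.add
        · exact continuous_subtype_val.comp continuous_fst
        · exact (continuous_const.sub (continuous_subtype_val.comp continuous_fst)).mul
            (hρKcont.comp continuous_snd)
      · exact continuous_subtype_val.comp continuous_snd
    · -- at 0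
      intro x
      apply Subtype.ext
      show ((0:ℝ) + (1 - (0:ℝ)) * ρ (x : Pt)) • (x : Pt) = ρ (x : Pt) • (x : Pt)
      norm_num
    · -- at 1
      intro x
      apply Subtype.ext
      show ((1:ℝ) + (1 - (1:ℝ)) * ρ (x : Pt)) • (x : Pt) = (x : Pt)
      norm_num

end
end

section
/- Let Ω ∈ 𝒮², let c > 0 be a real number, and let (m₁,m₂) ∈ ℤ² \ (ℤ_{≤0})². Then the inclusion map of ∂Ω(c:m₁,m₂) into ∂₊Ω(c:m₁,m₂) is a homotopy equivalence of topological spaces; explicitly, the map r sending x to ρ(x)·x, where ρ(x) is the unique positive real number with ρ(x)·x ∈ ∂Ω, restricts to a continuous map ∂₊Ω(c:m₁,m₂) → ∂Ω(c:m₁,m₂) which is a homotopy inverse of the inclusion. -/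
open Set Real

noncomputable section

namespace Stmt1Aux

def nrm (p : Pt) : ℝ := Real.sqrt (p.1 ^ 2 + p.2 ^ 2)
def dir (p : Pt) : Pt := (p.1 / nrm p, p.2 / nrm p)
def rho (r : Pt → ℝ) (p : Pt) : ℝ := r (dir p) / nrm p

lemma sq_add_sq_pos {p : Pt} (hp : p ≠ 0) : 0 < p.1 ^ 2 + p.2 ^ 2 := by
  rcases eq_or_ne p.1 0 with h1 | h1
  · have h2 : p.2 ≠ 0 := fun h2 => hp (Prod.ext h1 h2)
    positivity
  · positivity

lemma nrm_pos {p : Pt} (hp : p ≠ 0) : 0 < nrm p := Real.sqrt_pos.2 (sq_add_sq_pos hp)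

lemma nrm_sq (p : Pt) : nrm p ^ 2 = p.1 ^ 2 + p.2 ^ 2 := Real.sq_sqrt (by positivity)

lemma dir_mem {p : Pt} (h1 : 0 ≤ p.1) (h2 : 0 ≤ p.2) (hp : p ≠ 0) : dir p ∈ Sigma2 := by
  have hn := nrm_pos hp
  refine ⟨div_nonneg h1 hn.le, div_nonneg h2 hn.le, ?_⟩
  have h : (p.1 / nrm p) ^ 2 + (p.2 / nrm p) ^ 2 = (p.1 ^ 2 + p.2 ^ 2) / nrm p ^ 2 := by ring
  show (p.1 / nrm p) ^ 2 + (p.2 / nrm p) ^ 2 = 1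
  rw [h, nrm_sq, div_self (sq_add_sq_pos hp).ne']

lemma nrm_sigma {z : Pt} (hz : z ∈ Sigma2) : nrm z = 1 := by
  rw [nrm, hz.2.2, Real.sqrt_one]

lemma nrm_smul {t : ℝ} (ht : 0 ≤ t) (p : Pt) : nrm (t • p) = t * nrm p := by
  show Real.sqrt ((t • p).1 ^ 2 + (t • p).2 ^ 2) = _
  have h1 : (t • p).1 = t * p.1 := rfl
  have h2 : (t • p).2 = t * p.2 := rfl
  rw [h1, h2, show (t*p.1)^2 + (t*p.2)^2 = t^2 * (p.1^2+p.2^2) by ring,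
    Real.sqrt_mul (sq_nonneg t), Real.sqrt_sq ht]
  rfl

lemma mem_bdryOmega (r : Pt → ℝ) {z : Pt} (hz : z ∈ Sigma2) : r z • z ∈ bdryOmega r := by
  obtain ⟨hz1, hz2, hz3⟩ := hz
  have hle : z.1 ≤ 1 := by nlinarith [sq_nonneg z.2]
  have hcos : Real.cos (Real.arccos z.1) = z.1 := Real.cos_arccos (by linarith) hle
  have hsin : Real.sin (Real.arccos z.1) = z.2 := by
    rw [Real.sin_arccos, show 1 - z.1^2 = z.2^2 by linarith, Real.sqrt_sq hz2]
  refine ⟨Real.arccos z.1, ⟨Real.arccos_nonneg _, Real.arccos_le_pi_div_two.2 hz1⟩, ?_⟩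
  rw [gammaCurve, hcos, hsin]

lemma bdry_struct {r : Pt → ℝ} {p : Pt} (hp : p ∈ bdryOmega r) :
    ∃ z ∈ Sigma2, p = r z • z := by
  obtain ⟨θ, hθ, hpe⟩ := hp
  refine ⟨(Real.cos θ, Real.sin θ), ⟨?_, ?_, by simp [Real.cos_sq_add_sin_sq]⟩, hpe.symm⟩
  · exact Real.cos_nonneg_of_mem_Icc ⟨by linarith [hθ.1, Real.pi_pos], hθ.2⟩
  · exact Real.sin_nonneg_of_nonneg_of_le_pi hθ.1 (by linarith [hθ.2, Real.pi_pos])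

variable {r : Pt → ℝ} (hrpos : ∀ z ∈ Sigma2, 0 < r z)

lemma dir_smul_eq (p : Pt) (hp : p ≠ 0) : (nrm p)⁻¹ • p = dir p :=
  Prod.ext (inv_mul_eq_div _ _) (inv_mul_eq_div _ _)

lemma rho_smul_eq (p : Pt) (hp : p ≠ 0) : rho r p • p = r (dir p) • dir p := by
  have h : r (dir p) • dir p = r (dir p) • ((nrm p)⁻¹ • p) := by rw [dir_smul_eq p hp]
  rw [h, smul_smul, rho, div_eq_mul_inv]

include hrpos in
lemma rho_pos {p : Pt} (h1 : 0 ≤ p.1) (h2 : 0 ≤ p.2) (hp : p ≠ 0) : 0 < rho r p :=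
  div_pos (hrpos _ (dir_mem h1 h2 hp)) (nrm_pos hp)

lemma rho_smul_mem {p : Pt} (h1 : 0 ≤ p.1) (h2 : 0 ≤ p.2) (hp : p ≠ 0) :
    rho r p • p ∈ bdryOmega r := by
  rw [rho_smul_eq p hp]; exact mem_bdryOmega r (dir_mem h1 h2 hp)

include hrpos in
lemma rho_uniq {p : Pt} (hp : p ≠ 0) {t : ℝ} (ht : 0 < t)
    (hmem : t • p ∈ bdryOmega r) : t = rho r p := by
  obtain ⟨z, hz, heq⟩ := bdry_struct hmem
  have hrz : 0 < r z := hrpos z hz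
  have hn : t * nrm p = r z := by
    have h1 : nrm (t • p) = t * nrm p := nrm_smul ht.le p
    have h2 : nrm (r z • z) = r z := by rw [nrm_smul hrz.le, nrm_sigma hz, mul_one]
    rw [← heq, h1] at h2; exact h2
  have hzd : z = dir p := by
    have h3 : z = ((r z)⁻¹ * t) • p := by
      have := congrArg (fun q : Pt => (r z)⁻¹ • q) heq
      simp only [smul_smul] at this
      rw [inv_mul_cancel₀ hrz.ne', one_smul] at this
      exact this.symm
    rw [h3, show (r z)⁻¹ * t = (nrm p)⁻¹ by
      rw [← hn, mul_inv, mul_comm, ← mul_assoc, mul_inv_cancel₀ ht.ne', one_mul], dir_smul_eq p hp]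
  rw [rho, ← hzd, ← hn, mul_div_assoc, div_self (nrm_pos hp).ne', mul_one]

include hrpos in
lemma rho_eq_one {p : Pt} (hp0 : p ≠ 0) (hp : p ∈ bdryOmega r) : rho r p = 1 :=
  ((rho_uniq hrpos hp0 one_pos (by rw [one_smul]; exact hp))).symm

include hrpos in
lemma plus_ne_zero {p : Pt} (hp : p ∈ bdryPlusOmega r) :
    (0 ≤ p.1 ∧ 0 ≤ p.2) ∧ p ≠ 0 := by
  have h10 : (1, 0) ∈ Sigma2 := ⟨by norm_num, by norm_num, by norm_num⟩
  have h01 : (0, 1) ∈ Sigma2 := ⟨by norm_num, by norm_num, by norm_num⟩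
  rcases hp with (hp | hp) | hp
  · obtain ⟨z, hz, hpe⟩ := bdry_struct hp
    have hrz := hrpos z hz
    have h1 : p.1 = r z * z.1 := by rw [hpe]; rfl
    have h2 : p.2 = r z * z.2 := by rw [hpe]; rfl
    refine ⟨⟨by rw [h1]; exact mul_nonneg hrz.le hz.1, by rw [h2]; exact mul_nonneg hrz.le hz.2.1⟩, ?_⟩
    intro h0
    have : nrm p = r z := by rw [hpe, nrm_smul hrz.le, nrm_sigma hz, mul_one]
    rw [h0, show nrm (0:Pt) = 0 by simp [nrm]] at this
    exact hrz.ne' this.symm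
  · have hp1 : 0 < p.1 := lt_of_lt_of_le (hrpos _ h10) hp.2
    exact ⟨⟨hp1.le, hp.1.ge⟩, fun h0 => by rw [h0] at hp1; exact lt_irrefl 0 hp1⟩
  · have hp2 : 0 < p.2 := lt_of_lt_of_le (hrpos _ h01) hp.2
    exact ⟨⟨hp.1.ge, hp2.le⟩, fun h0 => by rw [h0] at hp2; exact lt_irrefl 0 hp2⟩

include hrpos in
lemma key {c : ℝ} (hc : 0 < c) {m₁ m₂ : ℤ} {p : Pt} {s : ℝ}
    (hp : p ∈ bdryPlusOmega r) (hA : Afun m₁ m₂ p < c) (hs0 : 0 ≤ s) (hs1 : s ≤ 1) :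
    ((1 - s) * rho r p + s) • p ∈ bdryPlusOmega r ∧
      Afun m₁ m₂ (((1 - s) * rho r p + s) • p) < c := by
  obtain ⟨⟨h1, h2⟩, hp0⟩ := plus_ne_zero hrpos hp
  have h10 : ((1:ℝ), (0:ℝ)) ∈ Sigma2 := ⟨by norm_num, by norm_num, by norm_num⟩
  have h01 : ((0:ℝ), (1:ℝ)) ∈ Sigma2 := ⟨by norm_num, by norm_num, by norm_num⟩
  set a := (1 - s) * rho r p + s with ha
  have hfst : (a • p).1 = a * p.1 := rfl
  have hsnd : (a • p).2 = a * p.2 := rfl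
  rcases hp with (hBd | hray) | hray
  · have hrho : rho r p = 1 := rho_eq_one hrpos hp0 hBd
    have h : a = 1 := by rw [ha, hrho]; ring
    rw [h, one_smul]
    exact ⟨Or.inl (Or.inl hBd), hA⟩
  · have hr10 : 0 < r (1,0) := hrpos _ h10
    have hp1 : 0 < p.1 := lt_of_lt_of_le hr10 hray.2
    have hrho : rho r p = r (1,0) / p.1 := by
      refine (rho_uniq hrpos hp0 (div_pos hr10 hp1) ?_).symm
      have h : (r (1,0) / p.1) • p = r (1,0) • ((1,0) : Pt) := by
        refine Prod.ext ?_ ?_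
        · show r (1,0) / p.1 * p.1 = r (1,0) * 1
          field_simp
        · show r (1,0) / p.1 * p.2 = r (1,0) * 0
          rw [hray.1]; ring
      rw [h]; exact mem_bdryOmega r h10
    have hav : a * p.1 = (1 - s) * r (1,0) + s * p.1 := by
      rw [ha, hrho]; field_simp
    have hge : r (1,0) ≤ a * p.1 := by rw [hav]; nlinarith [hray.2]
    have hle : a * p.1 ≤ p.1 := by rw [hav]; nlinarith [hray.2]
    constructor
    · exact Or.inl (Or.inr ⟨by rw [hsnd, hray.1, mul_zero], by rw [hfst]; exact hge⟩)
    · have hA' : (m₁:ℝ) * p.1 < c := by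
        have := hA; rw [Afun, hray.1, mul_zero, add_zero] at this; exact this
      rw [Afun, hfst, hsnd, hray.1, mul_zero, mul_zero, add_zero]
      rcases le_or_gt (m₁:ℝ) 0 with hm | hm
      · nlinarith
      · nlinarith
  · have hr01 : 0 < r (0,1) := hrpos _ h01
    have hp2 : 0 < p.2 := lt_of_lt_of_le hr01 hray.2
    have hrho : rho r p = r (0,1) / p.2 := by
      refine (rho_uniq hrpos hp0 (div_pos hr01 hp2) ?_).symm
      have h : (r (0,1) / p.2) • p = r (0,1) • ((0,1) : Pt) := by
        refine Prod.ext ?_ ?_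
        · show r (0,1) / p.2 * p.1 = r (0,1) * 0
          rw [hray.1]; ring
        · show r (0,1) / p.2 * p.2 = r (0,1) * 1
          field_simp
      rw [h]; exact mem_bdryOmega r h01
    have hav : a * p.2 = (1 - s) * r (0,1) + s * p.2 := by
      rw [ha, hrho]; field_simp
    have hge : r (0,1) ≤ a * p.2 := by rw [hav]; nlinarith [hray.2]
    have hle : a * p.2 ≤ p.2 := by rw [hav]; nlinarith [hray.2]
    constructor
    · exact Or.inr ⟨by rw [hfst, hray.1, mul_zero], by rw [hsnd]; exact hge⟩
    · have hA' : (m₂:ℝ) * p.2 < c := by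
        have := hA; rw [Afun, hray.1, mul_zero, zero_add] at this; exact this
      rw [Afun, hfst, hsnd, hray.1, mul_zero, mul_zero, zero_add]
      rcases le_or_gt (m₂:ℝ) 0 with hm | hm
      · nlinarith
      · nlinarith

lemma nrm_continuous : Continuous nrm :=
  Real.continuous_sqrt.comp ((continuous_fst.pow 2).add (continuous_snd.pow 2))

lemma rho_contOn (hr : ContinuousOn r Sigma2) :
    ContinuousOn (rho r) {p : Pt | (0 ≤ p.1 ∧ 0 ≤ p.2) ∧ p ≠ 0} := by
  have hnrm : ContinuousOn nrm {p : Pt | (0 ≤ p.1 ∧ 0 ≤ p.2) ∧ p ≠ 0} :=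
    nrm_continuous.continuousOn
  have hne : ∀ p ∈ {p : Pt | (0 ≤ p.1 ∧ 0 ≤ p.2) ∧ p ≠ 0}, nrm p ≠ 0 :=
    fun p hp => (nrm_pos hp.2).ne'
  have hdir : ContinuousOn dir {p : Pt | (0 ≤ p.1 ∧ 0 ≤ p.2) ∧ p ≠ 0} :=
    (continuous_fst.continuousOn.div hnrm hne).prodMk
      (continuous_snd.continuousOn.div hnrm hne)
  exact (hr.comp hdir fun p hp => dir_mem hp.1.1 hp.1.2 hp.2).div hnrm hne

end Stmt1Aux

/-- the inclusion `∂Ω(c:m₁,m₂) ↪ ∂₊Ω(c:m₁,m₂)` is a homotopy equivalence,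
with homotopy inverse the restriction of the (continuous) map `x ↦ ρ(x)·x`, where `ρ(x)`
is the unique positive real with `ρ(x)·x ∈ ∂Ω`. -/
theorem stmt1 (Ω : Set Pt) (r : Pt → ℝ) (hΩ : IsToricBase Ω r) (c : ℝ) (hc : 0 < c)
    (m₁ m₂ : ℤ) (hm : ¬(m₁ ≤ 0 ∧ m₂ ≤ 0))
    (hsub : {p ∈ bdryOmega r | Afun m₁ m₂ p < c} ⊆ {p ∈ bdryPlusOmega r | Afun m₁ m₂ p < c}) :
    ∃ ρ : Pt → ℝ,
      (∀ p ∈ {p ∈ bdryPlusOmega r | Afun m₁ m₂ p < c},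
        0 < ρ p ∧ ρ p • p ∈ bdryOmega r ∧
          ∀ t : ℝ, 0 < t → t • p ∈ bdryOmega r → t = ρ p) ∧
      ∃ rmap : C(↥{p ∈ bdryPlusOmega r | Afun m₁ m₂ p < c},
          ↥{p ∈ bdryOmega r | Afun m₁ m₂ p < c}),
        (∀ x : ↥{p ∈ bdryPlusOmega r | Afun m₁ m₂ p < c},
          (rmap x : Pt) = ρ (x : Pt) • (x : Pt)) ∧
        (rmap.comp ⟨Set.inclusion hsub, continuous_inclusion hsub⟩).Homotopic
          (ContinuousMap.id _) ∧
        ((⟨Set.inclusion hsub, continuous_inclusion hsub⟩ :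
            C(↥{p ∈ bdryOmega r | Afun m₁ m₂ p < c},
              ↥{p ∈ bdryPlusOmega r | Afun m₁ m₂ p < c})).comp rmap).Homotopic
          (ContinuousMap.id _) := by
  obtain ⟨hsmooth, hrpos, hΩeq⟩ := hΩ
  have hprop : ∀ p ∈ {p ∈ bdryPlusOmega r | Afun m₁ m₂ p < c},
      0 < Stmt1Aux.rho r p ∧ Stmt1Aux.rho r p • p ∈ bdryOmega r ∧
        ∀ t : ℝ, 0 < t → t • p ∈ bdryOmega r → t = Stmt1Aux.rho r p := by
    intro p hp
    obtain ⟨⟨h1, h2⟩, hp0⟩ := Stmt1Aux.plus_ne_zero hrpos hp.1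
    exact ⟨Stmt1Aux.rho_pos hrpos h1 h2 hp0, Stmt1Aux.rho_smul_mem h1 h2 hp0,
      fun t ht hmem => Stmt1Aux.rho_uniq hrpos hp0 ht hmem⟩
  refine ⟨Stmt1Aux.rho r, hprop, ?_⟩
  set S := {p ∈ bdryPlusOmega r | Afun m₁ m₂ p < c} with hS
  set T := {p ∈ bdryOmega r | Afun m₁ m₂ p < c} with hT
  have hSD : ∀ x : S, ((x : Pt) ∈ {p : Pt | (0 ≤ p.1 ∧ 0 ≤ p.2) ∧ p ≠ 0}) :=
    fun x => Stmt1Aux.plus_ne_zero hrpos x.2.1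
  have hrhoCont : Continuous fun x : S => Stmt1Aux.rho r (x : Pt) :=
    (Stmt1Aux.rho_contOn hsmooth.continuousOn).comp_continuous continuous_subtype_val hSD
  have hmemT : ∀ x : S, Stmt1Aux.rho r (x : Pt) • (x : Pt) ∈ T := by
    intro x
    obtain ⟨⟨h1, h2⟩, hp0⟩ := hSD x
    refine ⟨Stmt1Aux.rho_smul_mem h1 h2 hp0, ?_⟩
    have hk := (Stmt1Aux.key hrpos hc x.2.1 x.2.2 (le_refl (0:ℝ)) zero_le_one).2
    simpa using hk
  set rmap : C(S, T) :=
    ⟨fun x => ⟨Stmt1Aux.rho r (x : Pt) • (x : Pt), hmemT x⟩,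
      (hrhoCont.smul continuous_subtype_val).subtype_mk _⟩ with hrmap
  refine ⟨rmap, fun x => rfl, ?_, ?_⟩
  · have hcomp : rmap.comp ⟨Set.inclusion hsub, continuous_inclusion hsub⟩ =
        ContinuousMap.id _ := by
      apply ContinuousMap.ext
      intro x
      apply Subtype.ext
      obtain ⟨⟨h1, h2⟩, hp0⟩ := Stmt1Aux.plus_ne_zero hrpos (hsub x.2).1
      show Stmt1Aux.rho r (x : Pt) • (x : Pt) = (x : Pt)
      rw [Stmt1Aux.rho_eq_one hrpos hp0 x.2.1, one_smul]
    rw [hcomp]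
  · refine ⟨⟨⟨fun q => ⟨((1 - (q.1 : ℝ)) * Stmt1Aux.rho r (q.2 : Pt) + (q.1 : ℝ)) • (q.2 : Pt),
      ?_⟩, ?_⟩, ?_, ?_⟩⟩
    · have hk := Stmt1Aux.key hrpos hc q.2.2.1 q.2.2.2 q.1.2.1 q.1.2.2
      exact ⟨hk.1, hk.2⟩
    · have c1 : Continuous fun q : unitInterval × S => (q.1 : ℝ) :=
        continuous_subtype_val.comp continuous_fst
      have c2 : Continuous fun q : unitInterval × S => Stmt1Aux.rho r (q.2 : Pt) :=
        hrhoCont.comp continuous_snd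
      have c3 : Continuous fun q : unitInterval × S => (q.2 : Pt) :=
        continuous_subtype_val.comp continuous_snd
      exact (((continuous_const.sub c1).mul c2).add c1).smul c3 |>.subtype_mk _
    · intro x
      apply Subtype.ext
      show ((1 - ((0 : unitInterval) : ℝ)) * Stmt1Aux.rho r (x : Pt) + ((0 : unitInterval) : ℝ))
          • (x : Pt) = Stmt1Aux.rho r (x : Pt) • (x : Pt)
      norm_num
    · intro x
      apply Subtype.ext
      show ((1 - ((1 : unitInterval) : ℝ)) * Stmt1Aux.rho r (x : Pt) + ((1 : unitInterval) : ℝ))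
          • (x : Pt) = (x : Pt)
      simp


end
end

section
/- Let Ω ∈ 𝒮². Then spec(Ω) is a nonempty subset of ℝ_{>0} which is closed in ℝ and has Lebesgue measure zero; in particular spec(Ω) has a minimum, and this minimum is positive. -/
open Set Real

noncomputable section

namespace Stmt3Proof
open Filter Topology MeasureTheory

lemma mem_Sigma2 {θ : ℝ} (hθ : θ ∈ Icc (0:ℝ) (π/2)) :
    ((Real.cos θ, Real.sin θ) : Pt) ∈ Sigma2 := by
  refine ⟨Real.cos_nonneg_of_mem_Icc ⟨by linarith [hθ.1, pi_div_two_pos], hθ.2⟩,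
    Real.sin_nonneg_of_nonneg_of_le_pi hθ.1 (by linarith [hθ.2, pi_div_two_pos]),
    by simp [Real.cos_sq_add_sin_sq θ]⟩

lemma ff_eq (r : Pt → ℝ) (m₁ m₂ : ℤ) (t : ℝ) :
    Afun m₁ m₂ (gammaCurve r t)
      = m₁ * (r (Real.cos t, Real.sin t) * Real.cos t)
        + m₂ * (r (Real.cos t, Real.sin t) * Real.sin t) := by
  simp [Afun, gammaCurve, Prod.smul_def, smul_eq_mul]

lemma ff_zero (r : Pt → ℝ) (m₁ m₂ : ℤ) :
    Afun m₁ m₂ (gammaCurve r 0) = m₁ * r (1, 0) := by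
  rw [ff_eq]; simp

lemma ff_pi_div_two (r : Pt → ℝ) (m₁ m₂ : ℤ) :
    Afun m₁ m₂ (gammaCurve r (π/2)) = m₂ * r (0, 1) := by
  rw [ff_eq]; simp

lemma rho_smooth {r : Pt → ℝ} (hr : ContDiffOn ℝ 1 r Sigma2) :
    ContDiffOn ℝ 1 (fun t => r (Real.cos t, Real.sin t)) (Icc 0 (π/2)) := by
  apply hr.comp ((ContDiff.prodMk contDiff_cos contDiff_sin).contDiffOn)
  intro θ hθ
  exact mem_Sigma2 hθ

lemma g1_smooth {r : Pt → ℝ} (hr : ContDiffOn ℝ 1 r Sigma2) :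
    ContDiffOn ℝ 1 (fun t => r (Real.cos t, Real.sin t) * Real.cos t) (Icc 0 (π/2)) :=
  (rho_smooth hr).mul contDiff_cos.contDiffOn

lemma g2_smooth {r : Pt → ℝ} (hr : ContDiffOn ℝ 1 r Sigma2) :
    ContDiffOn ℝ 1 (fun t => r (Real.cos t, Real.sin t) * Real.sin t) (Icc 0 (π/2)) :=
  (rho_smooth hr).mul contDiff_sin.contDiffOn

lemma ff_contOn {r : Pt → ℝ} (hr : ContDiffOn ℝ 1 r Sigma2) (m₁ m₂ : ℤ) :
    ContinuousOn (fun t => Afun m₁ m₂ (gammaCurve r t)) (Icc 0 (π/2)) := by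
  have h : ContinuousOn (fun t => (m₁:ℝ) * (r (Real.cos t, Real.sin t) * Real.cos t)
      + (m₂:ℝ) * (r (Real.cos t, Real.sin t) * Real.sin t)) (Icc 0 (π/2)) :=
    (continuousOn_const.mul (g1_smooth hr).continuousOn).add
      (continuousOn_const.mul (g2_smooth hr).continuousOn)
  exact h.congr fun t _ => ff_eq r m₁ m₂ t

lemma hasDerivAt_g1 {r : Pt → ℝ} (hr : ContDiffOn ℝ 1 r Sigma2) {θ : ℝ}
    (hθ : θ ∈ Ioo (0:ℝ) (π/2)) :
    HasDerivAt (fun t => r (Real.cos t, Real.sin t) * Real.cos t)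
      (derivWithin (fun t => r (Real.cos t, Real.sin t) * Real.cos t) (Icc 0 (π/2)) θ) θ := by
  have hmem : Icc (0:ℝ) (π/2) ∈ 𝓝 θ := Icc_mem_nhds hθ.1 hθ.2
  have hd := ((g1_smooth hr).differentiableOn one_ne_zero θ
    (Ioo_subset_Icc_self hθ)).differentiableAt hmem
  rw [derivWithin_of_mem_nhds hmem]
  exact hd.hasDerivAt

lemma hasDerivAt_g2 {r : Pt → ℝ} (hr : ContDiffOn ℝ 1 r Sigma2) {θ : ℝ}
    (hθ : θ ∈ Ioo (0:ℝ) (π/2)) :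
    HasDerivAt (fun t => r (Real.cos t, Real.sin t) * Real.sin t)
      (derivWithin (fun t => r (Real.cos t, Real.sin t) * Real.sin t) (Icc 0 (π/2)) θ) θ := by
  have hmem : Icc (0:ℝ) (π/2) ∈ 𝓝 θ := Icc_mem_nhds hθ.1 hθ.2
  have hd := ((g2_smooth hr).differentiableOn one_ne_zero θ
    (Ioo_subset_Icc_self hθ)).differentiableAt hmem
  rw [derivWithin_of_mem_nhds hmem]
  exact hd.hasDerivAt

lemma key_identity {r : Pt → ℝ} (hr : ContDiffOn ℝ 1 r Sigma2) {θ : ℝ}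
    (hθ : θ ∈ Ioo (0:ℝ) (π/2)) :
    (r (Real.cos θ, Real.sin θ) * Real.cos θ) *
        derivWithin (fun t => r (Real.cos t, Real.sin t) * Real.sin t) (Icc 0 (π/2)) θ
      - (r (Real.cos θ, Real.sin θ) * Real.sin θ) *
        derivWithin (fun t => r (Real.cos t, Real.sin t) * Real.cos t) (Icc 0 (π/2)) θ
      = (r (Real.cos θ, Real.sin θ))^2 := by
  have hmem : Icc (0:ℝ) (π/2) ∈ 𝓝 θ := Icc_mem_nhds hθ.1 hθ.2
  have hdρ : DifferentiableAt ℝ (fun t => r (Real.cos t, Real.sin t)) θ :=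
    ((rho_smooth hr).differentiableOn one_ne_zero θ (Ioo_subset_Icc_self hθ)).differentiableAt hmem
  set e := deriv (fun t => r (Real.cos t, Real.sin t)) θ with he
  have hρ : HasDerivAt (fun t => r (Real.cos t, Real.sin t)) e θ := hdρ.hasDerivAt
  have H1 : HasDerivAt (fun t => r (Real.cos t, Real.sin t) * Real.cos t)
      (e * Real.cos θ + r (Real.cos θ, Real.sin θ) * (-Real.sin θ)) θ :=
    hρ.mul (Real.hasDerivAt_cos θ)
  have H2 : HasDerivAt (fun t => r (Real.cos t, Real.sin t) * Real.sin t)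
      (e * Real.sin θ + r (Real.cos θ, Real.sin θ) * Real.cos θ) θ :=
    hρ.mul (Real.hasDerivAt_sin θ)
  have h1 := (hasDerivAt_g1 hr hθ).unique H1
  have h2 := (hasDerivAt_g2 hr hθ).unique H2
  rw [h1, h2]
  linear_combination (r (Real.cos θ, Real.sin θ))^2 * (Real.sin_sq_add_cos_sq θ)

lemma hasDerivAt_ff {r : Pt → ℝ} (hr : ContDiffOn ℝ 1 r Sigma2) (m₁ m₂ : ℤ) {θ : ℝ}
    (hθ : θ ∈ Ioo (0:ℝ) (π/2)) :
    HasDerivAt (fun t => Afun m₁ m₂ (gammaCurve r t))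
      ((m₁ : ℝ) * derivWithin (fun t => r (Real.cos t, Real.sin t) * Real.cos t) (Icc 0 (π/2)) θ
       + (m₂ : ℝ) * derivWithin (fun t => r (Real.cos t, Real.sin t) * Real.sin t) (Icc 0 (π/2)) θ) θ := by
  have H := ((hasDerivAt_g1 hr hθ).const_mul (m₁ : ℝ)).add
    ((hasDerivAt_g2 hr hθ).const_mul (m₂ : ℝ))
  exact H.congr_of_eventuallyEq (Filter.Eventually.of_forall fun t => ff_eq r m₁ m₂ t)

lemma key_bound {r : Pt → ℝ} (hr : ContDiffOn ℝ 1 r Sigma2) {ρmin B : ℝ}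
    (hρpos : 0 < ρmin)
    (hρ : ∀ θ ∈ Icc (0:ℝ) (π/2), ρmin ≤ r (Real.cos θ, Real.sin θ))
    (hB1 : ∀ θ ∈ Icc (0:ℝ) (π/2),
      |derivWithin (fun t => r (Real.cos t, Real.sin t) * Real.cos t) (Icc 0 (π/2)) θ| ≤ B)
    (hB2 : ∀ θ ∈ Icc (0:ℝ) (π/2),
      |derivWithin (fun t => r (Real.cos t, Real.sin t) * Real.sin t) (Icc 0 (π/2)) θ| ≤ B)
    (m₁ m₂ : ℤ) {θ : ℝ} (hθ : θ ∈ Ioo (0:ℝ) (π/2))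
    (hcrit : deriv (fun t => Afun m₁ m₂ (gammaCurve r t)) θ = 0)
    (hvpos : 0 < Afun m₁ m₂ (gammaCurve r θ)) :
    ((max |m₁| |m₂| : ℤ) : ℝ) * ρmin^2 ≤ Afun m₁ m₂ (gammaCurve r θ) * B := by
  have hθP : θ ∈ Icc (0:ℝ) (π/2) := Ioo_subset_Icc_self hθ
  set d1θ := derivWithin (fun t => r (Real.cos t, Real.sin t) * Real.cos t) (Icc 0 (π/2)) θ
  set d2θ := derivWithin (fun t => r (Real.cos t, Real.sin t) * Real.sin t) (Icc 0 (π/2)) θ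
  set v := Afun m₁ m₂ (gammaCurve r θ) with hvdef
  have hsum : (m₁ : ℝ) * d1θ + (m₂ : ℝ) * d2θ = 0 := by
    have h := (hasDerivAt_ff hr m₁ m₂ hθ).deriv
    rw [hcrit] at h
    exact h.symm
  have hid := key_identity hr hθ
  have hv : v = (m₁ : ℝ) * (r (Real.cos θ, Real.sin θ) * Real.cos θ)
      + (m₂ : ℝ) * (r (Real.cos θ, Real.sin θ) * Real.sin θ) := ff_eq r m₁ m₂ θ
  have e1 : (m₁ : ℝ) * (r (Real.cos θ, Real.sin θ))^2 = v * d2θ := by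
    rw [hv]
    linear_combination (-(m₁:ℝ)) * hid + (-(r (Real.cos θ, Real.sin θ) * Real.sin θ)) * hsum
  have e2 : (m₂ : ℝ) * (r (Real.cos θ, Real.sin θ))^2 = -(v * d1θ) := by
    rw [hv]
    linear_combination (-(m₂:ℝ)) * hid + (r (Real.cos θ, Real.sin θ) * Real.cos θ) * hsum
  have hρθ : ρmin ≤ r (Real.cos θ, Real.sin θ) := hρ θ hθP
  have hsq : ρmin^2 ≤ (r (Real.cos θ, Real.sin θ))^2 := by nlinarith
  have hm1 : |(m₁ : ℝ)| * ρmin^2 ≤ v * B := by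
    calc |(m₁ : ℝ)| * ρmin^2 ≤ |(m₁ : ℝ)| * (r (Real.cos θ, Real.sin θ))^2 :=
          mul_le_mul_of_nonneg_left hsq (abs_nonneg _)
      _ = |(m₁ : ℝ) * (r (Real.cos θ, Real.sin θ))^2| := by
          rw [abs_mul, abs_of_nonneg (by positivity : (0:ℝ) ≤ (r (Real.cos θ, Real.sin θ))^2)]
      _ = |v * d2θ| := by rw [e1]
      _ = v * |d2θ| := by rw [abs_mul, abs_of_pos hvpos]
      _ ≤ v * B := mul_le_mul_of_nonneg_left (hB2 θ hθP) hvpos.le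
  have hm2 : |(m₂ : ℝ)| * ρmin^2 ≤ v * B := by
    calc |(m₂ : ℝ)| * ρmin^2 ≤ |(m₂ : ℝ)| * (r (Real.cos θ, Real.sin θ))^2 :=
          mul_le_mul_of_nonneg_left hsq (abs_nonneg _)
      _ = |(m₂ : ℝ) * (r (Real.cos θ, Real.sin θ))^2| := by
          rw [abs_mul, abs_of_nonneg (by positivity : (0:ℝ) ≤ (r (Real.cos θ, Real.sin θ))^2)]
      _ = |-(v * d1θ)| := by rw [e2]
      _ = v * |d1θ| := by rw [abs_neg, abs_mul, abs_of_pos hvpos]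
      _ ≤ v * B := mul_le_mul_of_nonneg_left (hB1 θ hθP) hvpos.le
  have hcast : ((max |m₁| |m₂| : ℤ) : ℝ) = max |(m₁ : ℝ)| |(m₂ : ℝ)| := by
    push_cast
    rfl
  rw [hcast]
  rcases max_choice |(m₁ : ℝ)| |(m₂ : ℝ)| with h | h <;> rw [h]
  · exact hm1
  · exact hm2

/-- The (interior) critical set of `A_{m} ∘ γ`. -/
def Kset (r : Pt → ℝ) (q : ℤ × ℤ) : Set ℝ :=
  {θ | θ ∈ Ioo (0:ℝ) (π/2) ∧ ¬(q.1 ≤ 0 ∧ q.2 ≤ 0) ∧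
    deriv (fun t => Afun q.1 q.2 (gammaCurve r t)) θ = 0 ∧
    0 < Afun q.1 q.2 (gammaCurve r θ)}

/-- The closure of the set of critical values. -/
def Dset (r : Pt → ℝ) (q : ℤ × ℤ) : Set ℝ :=
  (fun θ => Afun q.1 q.2 (gammaCurve r θ)) '' closure (Kset r q)

lemma closure_Kset_subset (r : Pt → ℝ) (q : ℤ × ℤ) :
    closure (Kset r q) ⊆ Icc (0:ℝ) (π/2) :=
  closure_minimal (fun θ hθ => Ioo_subset_Icc_self hθ.1) isClosed_Icc

lemma Dset_compact {r : Pt → ℝ} (hr : ContDiffOn ℝ 1 r Sigma2) (q : ℤ × ℤ) :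
    IsCompact (Dset r q) :=
  (isCompact_Icc.of_isClosed_subset isClosed_closure (closure_Kset_subset r q)).image_of_continuousOn
    ((ff_contOn hr q.1 q.2).mono (closure_Kset_subset r q))

lemma Dset_spec {r : Pt → ℝ} (hr : ContDiffOn ℝ 1 r Sigma2) {ρmin B : ℝ}
    (hρpos : 0 < ρmin) (hBpos : 0 < B)
    (hρ : ∀ θ ∈ Icc (0:ℝ) (π/2), ρmin ≤ r (Real.cos θ, Real.sin θ))
    (hB1 : ∀ θ ∈ Icc (0:ℝ) (π/2),
      |derivWithin (fun t => r (Real.cos t, Real.sin t) * Real.cos t) (Icc 0 (π/2)) θ| ≤ B)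
    (hB2 : ∀ θ ∈ Icc (0:ℝ) (π/2),
      |derivWithin (fun t => r (Real.cos t, Real.sin t) * Real.sin t) (Icc 0 (π/2)) θ| ≤ B)
    (hr10 : 0 < r (1,0)) (hr01 : 0 < r (0,1))
    (q : ℤ × ℤ) {x : ℝ} (hx : x ∈ Dset r q) :
    ((max |q.1| |q.2| : ℤ) : ℝ) * (ρmin^2 / B) ≤ x ∧ x ∈ spec r := by
  obtain ⟨θ, hθcl, rfl⟩ := hx
  obtain ⟨u, hu, hulim⟩ := mem_closure_iff_seq_limit.mp hθcl
  have hvalid : ¬(q.1 ≤ 0 ∧ q.2 ≤ 0) := (hu 0).2.1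
  have hmaxZ : (1:ℤ) ≤ max |q.1| |q.2| := by
    rcases not_and_or.mp hvalid with h | h
    · push_neg at h
      exact le_trans (le_trans h (le_abs_self _)) (le_max_left _ _)
    · push_neg at h
      exact le_trans (le_trans h (le_abs_self _)) (le_max_right _ _)
  have hmax1 : (1:ℝ) ≤ ((max |q.1| |q.2| : ℤ) : ℝ) := by exact_mod_cast hmaxZ
  have hθP : θ ∈ Icc (0:ℝ) (π/2) := closure_Kset_subset r q hθcl
  have hulimP : Tendsto u atTop (𝓝[Icc (0:ℝ) (π/2)] θ) :=
    tendsto_nhdsWithin_iff.mpr ⟨hulim, Eventually.of_forall fun n => Ioo_subset_Icc_self (hu n).1⟩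
  have htendF : Tendsto (fun n => Afun q.1 q.2 (gammaCurve r (u n))) atTop
      (𝓝 (Afun q.1 q.2 (gammaCurve r θ))) :=
    ((ff_contOn hr q.1 q.2) θ hθP).tendsto.comp hulimP
  have hlow : ∀ n, ((max |q.1| |q.2| : ℤ) : ℝ) * (ρmin^2 / B)
      ≤ Afun q.1 q.2 (gammaCurve r (u n)) := by
    intro n
    have h := key_bound hr hρpos hρ hB1 hB2 q.1 q.2 (hu n).1 (hu n).2.2.1 (hu n).2.2.2
    have h2 := (div_le_iff₀ hBpos).mpr h
    rwa [mul_div_assoc] at h2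
  have hxlow : ((max |q.1| |q.2| : ℤ) : ℝ) * (ρmin^2 / B) ≤ Afun q.1 q.2 (gammaCurve r θ) :=
    ge_of_tendsto htendF (Eventually.of_forall hlow)
  have hcpos : 0 < ρmin^2 / B := by positivity
  have hxpos : 0 < Afun q.1 q.2 (gammaCurve r θ) :=
    lt_of_lt_of_le (by nlinarith) hxlow
  refine ⟨hxlow, ?_⟩
  rcases eq_or_lt_of_le hθP.1 with h0 | h0
  · -- θ = 0
    have hθ0 : θ = 0 := h0.symm
    subst hθ0
    simp only [ff_zero] at hxpos ⊢
    have hq1R : 0 < (q.1 : ℝ) := by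
      rcases mul_pos_iff.mp hxpos with ⟨h, _⟩ | ⟨_, h⟩
      · exact h
      · exact absurd hr10 (not_lt.mpr h.le)
    have hq1 : 1 ≤ q.1 := by exact_mod_cast hq1R
    exact Set.mem_union_left _ (Set.mem_union_left _ ⟨q.1, hq1, rfl⟩)
  · rcases eq_or_lt_of_le hθP.2 with hpi | hpi
    · -- θ = π/2
      subst hpi
      simp only [ff_pi_div_two] at hxpos ⊢
      have hq2R : 0 < (q.2 : ℝ) := by
        rcases mul_pos_iff.mp hxpos with ⟨h, _⟩ | ⟨_, h⟩
        · exact h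
        · exact absurd hr01 (not_lt.mpr h.le)
      have hq2 : 1 ≤ q.2 := by exact_mod_cast hq2R
      exact Set.mem_union_left _ (Set.mem_union_right _ ⟨q.2, hq2, rfl⟩)
    · -- interior
      have hθIoo : θ ∈ Ioo (0:ℝ) (π/2) := ⟨h0, hpi⟩
      have hd1cont : ContinuousOn
          (derivWithin (fun t => r (Real.cos t, Real.sin t) * Real.cos t) (Icc 0 (π/2)))
          (Icc (0:ℝ) (π/2)) :=
        (g1_smooth hr).continuousOn_derivWithin (uniqueDiffOn_Icc pi_div_two_pos) le_rfl
      have hd2cont : ContinuousOn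
          (derivWithin (fun t => r (Real.cos t, Real.sin t) * Real.sin t) (Icc 0 (π/2)))
          (Icc (0:ℝ) (π/2)) :=
        (g2_smooth hr).continuousOn_derivWithin (uniqueDiffOn_Icc pi_div_two_pos) le_rfl
      have hGcont : ContinuousOn (fun t =>
          (q.1:ℝ) * derivWithin (fun s => r (Real.cos s, Real.sin s) * Real.cos s) (Icc 0 (π/2)) t
          + (q.2:ℝ) * derivWithin (fun s => r (Real.cos s, Real.sin s) * Real.sin s) (Icc 0 (π/2)) t)
          (Icc (0:ℝ) (π/2)) :=
        (continuousOn_const.mul hd1cont).add (continuousOn_const.mul hd2cont)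
      have htendG := (hGcont θ hθP).tendsto.comp hulimP
      have hGzero : ∀ n,
          (q.1:ℝ) * derivWithin (fun s => r (Real.cos s, Real.sin s) * Real.cos s) (Icc 0 (π/2)) (u n)
          + (q.2:ℝ) * derivWithin (fun s => r (Real.cos s, Real.sin s) * Real.sin s) (Icc 0 (π/2)) (u n) = 0 := by
        intro n
        have h := (hasDerivAt_ff hr q.1 q.2 (hu n).1).deriv
        rw [(hu n).2.2.1] at h
        exact h.symm
      have htendG0 : Tendsto (fun n : ℕ => (0:ℝ)) atTop (𝓝
          ((q.1:ℝ) * derivWithin (fun s => r (Real.cos s, Real.sin s) * Real.cos s) (Icc 0 (π/2)) θ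
          + (q.2:ℝ) * derivWithin (fun s => r (Real.cos s, Real.sin s) * Real.sin s) (Icc 0 (π/2)) θ)) := by
        refine htendG.congr fun n => ?_
        exact hGzero n
      have hGθ : (q.1:ℝ) * derivWithin (fun s => r (Real.cos s, Real.sin s) * Real.cos s) (Icc 0 (π/2)) θ
          + (q.2:ℝ) * derivWithin (fun s => r (Real.cos s, Real.sin s) * Real.sin s) (Icc 0 (π/2)) θ = 0 :=
        tendsto_nhds_unique htendG0 tendsto_const_nhds
      have hderiv : deriv (fun t => Afun q.1 q.2 (gammaCurve r t)) θ = 0 := by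
        rw [(hasDerivAt_ff hr q.1 q.2 hθIoo).deriv]
        exact hGθ
      exact Set.mem_union_right _
        ⟨q.1, q.2, hvalid, θ, Ioo_subset_Icc_self hθIoo, hderiv, hxpos, rfl⟩

end Stmt3Proof

/-- `spec(Ω)` is a nonempty subset of `ℝ_{>0}`, closed in `ℝ`, of Lebesgue
measure zero; in particular it has a minimum, which is positive. -/
theorem stmt3 (Ω : Set Pt) (r : Pt → ℝ) (hΩ : IsToricBase Ω r) :
    (spec r).Nonempty ∧ spec r ⊆ Ioi (0 : ℝ) ∧ IsClosed (spec r) ∧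
      MeasureTheory.volume (spec r) = 0 ∧ ∃ m : ℝ, IsLeast (spec r) m ∧ 0 < m := by
  obtain ⟨hr', hpos, -⟩ := hΩ
  have hr : ContDiffOn ℝ 1 r Sigma2 := hr'.of_le (by simp)
  have h10 : ((1, 0) : Pt) ∈ Sigma2 := ⟨by norm_num, by norm_num, by norm_num⟩
  have h01 : ((0, 1) : Pt) ∈ Sigma2 := ⟨by norm_num, by norm_num, by norm_num⟩
  have hr10 : 0 < r (1, 0) := hpos _ h10
  have hr01 : 0 < r (0, 1) := hpos _ h01
  -- constants
  obtain ⟨θ₀, hθ₀P, hminOn⟩ := isCompact_Icc.exists_isMinOn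
    ⟨0, le_refl (0:ℝ), le_of_lt pi_div_two_pos⟩ (Stmt3Proof.rho_smooth hr).continuousOn
  have hρ : ∀ θ ∈ Icc (0:ℝ) (π/2), r (Real.cos θ₀, Real.sin θ₀) ≤ r (Real.cos θ, Real.sin θ) :=
    fun θ hθ => hminOn hθ
  set ρmin := r (Real.cos θ₀, Real.sin θ₀) with hρmindef
  have hρminpos : 0 < ρmin := hpos _ (Stmt3Proof.mem_Sigma2 hθ₀P)
  obtain ⟨B₁, hB₁⟩ := isCompact_Icc.exists_bound_of_continuousOn
    ((Stmt3Proof.g1_smooth hr).continuousOn_derivWithin (uniqueDiffOn_Icc pi_div_two_pos) le_rfl)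
  obtain ⟨B₂, hB₂⟩ := isCompact_Icc.exists_bound_of_continuousOn
    ((Stmt3Proof.g2_smooth hr).continuousOn_derivWithin (uniqueDiffOn_Icc pi_div_two_pos) le_rfl)
  set B := max (max B₁ B₂) 1 with hBdef
  have hBpos : (0:ℝ) < B := lt_of_lt_of_le one_pos (le_max_right _ _)
  have hB1 : ∀ θ ∈ Icc (0:ℝ) (π/2),
      |derivWithin (fun t => r (Real.cos t, Real.sin t) * Real.cos t) (Icc 0 (π/2)) θ| ≤ B := by
    intro θ hθ
    rw [← Real.norm_eq_abs]
    exact (hB₁ θ hθ).trans ((le_max_left B₁ B₂).trans (le_max_left _ 1))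
  have hB2 : ∀ θ ∈ Icc (0:ℝ) (π/2),
      |derivWithin (fun t => r (Real.cos t, Real.sin t) * Real.sin t) (Icc 0 (π/2)) θ| ≤ B := by
    intro θ hθ
    rw [← Real.norm_eq_abs]
    exact (hB₂ θ hθ).trans ((le_max_right B₁ B₂).trans (le_max_left _ 1))
  set c₁ := ρmin^2 / B with hc₁def
  have hc₁pos : 0 < c₁ := by positivity
  have hDlow : ∀ q : ℤ × ℤ, ∀ x ∈ Stmt3Proof.Dset r q, ((max |q.1| |q.2| : ℤ) : ℝ) * c₁ ≤ x :=
    fun q x hx => (Stmt3Proof.Dset_spec hr hρminpos hBpos hρ hB1 hB2 hr10 hr01 q hx).1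
  have hDspec : ∀ q : ℤ × ℤ, Stmt3Proof.Dset r q ⊆ spec r :=
    fun q x hx => (Stmt3Proof.Dset_spec hr hρminpos hBpos hρ hB1 hB2 hr10 hr01 q hx).2
  have hDclosed : ∀ q : ℤ × ℤ, IsClosed (Stmt3Proof.Dset r q) :=
    fun q => (Stmt3Proof.Dset_compact hr q).isClosed
  -- nonempty
  have hne : (spec r).Nonempty :=
    ⟨r (1, 0), Set.mem_union_left _ (Set.mem_union_left _ ⟨1, le_refl 1, by simp⟩)⟩
  -- subset of Ioi 0
  have hsubset : spec r ⊆ Ioi (0:ℝ) := by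
    rintro x ((⟨m, hm, rfl⟩ | ⟨m, hm, rfl⟩) | ⟨m₁, m₂, hval, θ, hθP, hder, hvpos, rfl⟩)
    · have hm' : (0:ℝ) < (m:ℝ) := by exact_mod_cast lt_of_lt_of_le Int.zero_lt_one hm
      exact mul_pos hm' hr10
    · have hm' : (0:ℝ) < (m:ℝ) := by exact_mod_cast lt_of_lt_of_le Int.zero_lt_one hm
      exact mul_pos hm' hr01
    · exact hvpos
  -- closedness
  have hclosed : IsClosed (spec r) := by
    apply isClosed_of_closure_subset
    intro x hx
    set M := x + 1 with hM
    have hx2 : x ∈ closure (Iio M ∩ spec r) :=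
      (isOpen_Iio (a := M)).inter_closure ⟨by simp [hM], hx⟩
    set N₁ : ℤ := ⌈M / r (1, 0)⌉ with hN₁
    set N₂ : ℤ := ⌈M / r (0, 1)⌉ with hN₂
    set N₃ : ℤ := ⌈M / c₁⌉ with hN₃
    set T : Set ℝ := ((fun m : ℤ => (m:ℝ) * r (1, 0)) '' (Icc 1 N₁)) ∪
                     ((fun m : ℤ => (m:ℝ) * r (0, 1)) '' (Icc 1 N₂)) ∪
                     (⋃ q ∈ (Icc (-N₃) N₃ ×ˢ Icc (-N₃) N₃ : Set (ℤ × ℤ)), Stmt3Proof.Dset r q)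
      with hT
    have hTclosed : IsClosed T := by
      refine IsClosed.union (IsClosed.union ?_ ?_) ?_
      · exact ((finite_Icc (1:ℤ) N₁).image _).isClosed
      · exact ((finite_Icc (1:ℤ) N₂).image _).isClosed
      · exact Set.Finite.isClosed_biUnion ((finite_Icc _ _).prod (finite_Icc _ _))
          fun q _ => hDclosed q
    have hTspec : T ⊆ spec r := by
      rintro y ((⟨m, hm, rfl⟩ | ⟨m, hm, rfl⟩) | hy)
      · exact Set.mem_union_left _ (Set.mem_union_left _ ⟨m, hm.1, rfl⟩)
      · exact Set.mem_union_left _ (Set.mem_union_right _ ⟨m, hm.1, rfl⟩)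
      · simp only [mem_iUnion] at hy
        obtain ⟨q, _, hyD⟩ := hy
        exact hDspec q hyD
    have hsubT : Iio M ∩ spec r ⊆ T := by
      rintro y ⟨hylt, hy⟩
      have hyltM : y < M := hylt
      rcases hy with (⟨m, hm, rfl⟩ | ⟨m, hm, rfl⟩) | ⟨m₁, m₂, hval, θ, hθP, hder, hvpos, rfl⟩
      · refine Set.mem_union_left _ (Set.mem_union_left _ ⟨m, ⟨hm, ?_⟩, rfl⟩)
        have h1 : (m:ℝ) ≤ M / r (1, 0) := (le_div_iff₀ hr10).mpr hyltM.le
        exact_mod_cast h1.trans (Int.le_ceil _)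
      · refine Set.mem_union_left _ (Set.mem_union_right _ ⟨m, ⟨hm, ?_⟩, rfl⟩)
        have h1 : (m:ℝ) ≤ M / r (0, 1) := (le_div_iff₀ hr01).mpr hyltM.le
        exact_mod_cast h1.trans (Int.le_ceil _)
      · rcases eq_or_lt_of_le hθP.1 with h0 | h0
        · have hθ0 : θ = 0 := h0.symm
          subst hθ0
          simp only [Stmt3Proof.ff_zero] at hvpos hyltM ⊢
          have hq1R : 0 < (m₁:ℝ) := by
            rcases mul_pos_iff.mp hvpos with ⟨h, _⟩ | ⟨_, h⟩
            · exact h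
            · exact absurd hr10 (not_lt.mpr h.le)
          have hq1 : 1 ≤ m₁ := by exact_mod_cast hq1R
          refine Set.mem_union_left _ (Set.mem_union_left _ ⟨m₁, ⟨hq1, ?_⟩, rfl⟩)
          have h1 : (m₁:ℝ) ≤ M / r (1, 0) := (le_div_iff₀ hr10).mpr hyltM.le
          exact_mod_cast h1.trans (Int.le_ceil _)
        · rcases eq_or_lt_of_le hθP.2 with hpi | hpi
          · subst hpi
            simp only [Stmt3Proof.ff_pi_div_two] at hvpos hyltM ⊢
            have hq2R : 0 < (m₂:ℝ) := by
              rcases mul_pos_iff.mp hvpos with ⟨h, _⟩ | ⟨_, h⟩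
              · exact h
              · exact absurd hr01 (not_lt.mpr h.le)
            have hq2 : 1 ≤ m₂ := by exact_mod_cast hq2R
            refine Set.mem_union_left _ (Set.mem_union_right _ ⟨m₂, ⟨hq2, ?_⟩, rfl⟩)
            have h1 : (m₂:ℝ) ≤ M / r (0, 1) := (le_div_iff₀ hr01).mpr hyltM.le
            exact_mod_cast h1.trans (Int.le_ceil _)
          · have hθIoo : θ ∈ Ioo (0:ℝ) (π/2) := ⟨h0, hpi⟩
            have hKθ : θ ∈ Stmt3Proof.Kset r (m₁, m₂) := ⟨hθIoo, hval, hder, hvpos⟩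
            have hyD : Afun m₁ m₂ (gammaCurve r θ) ∈ Stmt3Proof.Dset r (m₁, m₂) :=
              ⟨θ, subset_closure hKθ, rfl⟩
            have hlow := hDlow (m₁, m₂) _ hyD
            have hmax : ((max |m₁| |m₂| : ℤ) : ℝ) ≤ M / c₁ := by
              rw [le_div_iff₀ hc₁pos]
              exact hlow.trans hyltM.le
            have hmaxZ : max |m₁| |m₂| ≤ N₃ := by
              exact_mod_cast hmax.trans (Int.le_ceil _)
            have hm₁ := abs_le.mp (le_trans (le_max_left |m₁| |m₂|) hmaxZ)
            have hm₂ := abs_le.mp (le_trans (le_max_right |m₁| |m₂|) hmaxZ)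
            refine Set.mem_union_right _ ?_
            exact mem_iUnion₂.mpr ⟨(m₁, m₂), ⟨⟨hm₁.1, hm₁.2⟩, ⟨hm₂.1, hm₂.2⟩⟩, hyD⟩
    have hxT : x ∈ T := by
      have h := closure_mono (hsubT.trans (subset_refl T)) hx2
      rwa [hTclosed.closure_eq] at h
    exact hTspec hxT
  -- measure zero
  have hmeas : MeasureTheory.volume (spec r) = 0 := by
    have hsub2 : spec r ⊆ (range fun m : ℤ => (m:ℝ) * r (1, 0)) ∪
        (range fun m : ℤ => (m:ℝ) * r (0, 1)) ∪
        ⋃ q : ℤ × ℤ, (fun θ => Afun q.1 q.2 (gammaCurve r θ)) '' (Stmt3Proof.Kset r q) := by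
      rintro y ((⟨m, hm, rfl⟩ | ⟨m, hm, rfl⟩) | ⟨m₁, m₂, hval, θ, hθP, hder, hvpos, rfl⟩)
      · exact Set.mem_union_left _ (Set.mem_union_left _ ⟨m, rfl⟩)
      · exact Set.mem_union_left _ (Set.mem_union_right _ ⟨m, rfl⟩)
      · rcases eq_or_lt_of_le hθP.1 with h0 | h0
        · have hθ0 : θ = 0 := h0.symm
          subst hθ0
          exact Set.mem_union_left _ (Set.mem_union_left _
            ⟨m₁, (Stmt3Proof.ff_zero r m₁ m₂).symm⟩)
        · rcases eq_or_lt_of_le hθP.2 with hpi | hpi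
          · subst hpi
            exact Set.mem_union_left _ (Set.mem_union_right _
              ⟨m₂, (Stmt3Proof.ff_pi_div_two r m₁ m₂).symm⟩)
          · exact Set.mem_union_right _
              (mem_iUnion.mpr ⟨(m₁, m₂), ⟨θ, ⟨⟨h0, hpi⟩, hval, hder, hvpos⟩, rfl⟩⟩)
    refine MeasureTheory.measure_mono_null hsub2 ?_
    refine MeasureTheory.measure_union_null (MeasureTheory.measure_union_null ?_ ?_) ?_
    · exact (Set.countable_range _).measure_zero _
    · exact (Set.countable_range _).measure_zero _
    · refine MeasureTheory.measure_iUnion_null fun q => ?_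
      refine MeasureTheory.addHaar_image_eq_zero_of_det_fderivWithin_eq_zero
        MeasureTheory.volume (f' := fun _ => (0 : ℝ →L[ℝ] ℝ)) ?_ ?_
      · intro θ hθ
        have h := Stmt3Proof.hasDerivAt_ff hr q.1 q.2 hθ.1
        have h2 := h.deriv
        rw [hθ.2.2.1] at h2
        rw [← h2] at h
        have h3 := h.hasFDerivAt.hasFDerivWithinAt (s := Stmt3Proof.Kset r q)
        have hzero : (ContinuousLinearMap.toSpanSingleton ℝ (0:ℝ)) = 0 := by
          ext
          simp
        rwa [hzero] at h3
      · intro θ _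
        simp [ContinuousLinearMap.det]
  -- least element
  have hbdd : BddBelow (spec r) := ⟨0, fun y hy => (hsubset hy).le⟩
  have hmem : sInf (spec r) ∈ spec r := hclosed.csInf_mem hne hbdd
  exact ⟨hne, hsubset, hclosed, hmeas,
    ⟨sInf (spec r), ⟨hmem, fun y hy => csInf_le hbdd hy⟩, hsubset hmem⟩⟩


end
end

section
/- Let (C_*, d) be a chain complex of ℚ-vector spaces indexed by ℤ, and let (T_*, D) be the associated twisted complex. Define u : T_n → T_{n−2} by (ux)_{m₁,m₂,i} := x_{m₁+1,m₂,i} + x_{m₁,m₂+1,i} for i ∈ {0,1}. Then u is a chain map: D ∘ u = u ∘ D. -/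
noncomputable section

/-- The index set `S = ℤ² \ (ℤ_{≤0})²`. -/
abbrev SIdx : Type := {m : ℤ × ℤ // ¬(m.1 ≤ 0 ∧ m.2 ≤ 0)}

/-- `(m₁,m₂) ↦ (m₁+1,m₂)`. -/
def shiftA (m : SIdx) : SIdx :=
  ⟨(m.1.1 + 1, m.1.2), fun h => m.2 ⟨by have := h.1; omega, h.2⟩⟩

/-- `(m₁,m₂) ↦ (m₁,m₂+1)`. -/
def shiftB (m : SIdx) : SIdx :=
  ⟨(m.1.1, m.1.2 + 1), fun h => m.2 ⟨h.1, by have := h.2; omega⟩⟩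

/-- Transport along an equality of indices in a `ℤ`-indexed family of `ℚ`-modules. -/
def famCast (F : ℤ → Type*) [∀ n, AddCommGroup (F n)] [∀ n, Module ℚ (F n)]
    {a b : ℤ} (h : a = b) : F a ≃ₗ[ℚ] F b := by
  subst h; exact LinearEquiv.refl _ _

/-- The twisted graded module
`T_n = ⊕_{(m₁,m₂) ∈ S} (C_{n+1−2(m₁+m₂)} ⊕ C_{n−2(m₁+m₂)})`. -/
abbrev TF (C : ℤ → Type) [∀ n, AddCommGroup (C n)] [∀ n, Module ℚ (C n)] (n : ℤ) : Type :=
  Π₀ m : SIdx, (C (n + 1 - 2 * (m.1.1 + m.1.2)) × C (n - 2 * (m.1.1 + m.1.2)))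

/-- The defining componentwise formula for the twisted differential `D`. -/
def IsTwisted (C : ℤ → Type) [∀ n, AddCommGroup (C n)] [∀ n, Module ℚ (C n)]
    (d : ∀ n : ℤ, C n →ₗ[ℚ] C (n - 1)) (D : ∀ n : ℤ, TF C n →ₗ[ℚ] TF C (n - 1)) : Prop :=
  ∀ (n : ℤ) (x : TF C n) (m : SIdx),
    (D n x m).1 =
      famCast C (a := n + 1 - 2 * (m.1.1 + m.1.2) - 1) (b := n - 1 + 1 - 2 * (m.1.1 + m.1.2))
        (by omega) (d (n + 1 - 2 * (m.1.1 + m.1.2)) (x m).1) ∧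
    (D n x m).2 =
      famCast C (a := n - 2 * (m.1.1 + m.1.2) - 1) (b := n - 1 - 2 * (m.1.1 + m.1.2))
        (by omega) (d (n - 2 * (m.1.1 + m.1.2)) (x m).2) +
      ((-1 : ℚ) ^ n) •
        (m.1.2 • famCast C (a := n + 1 - 2 * ((m.1.1 + 1) + m.1.2))
            (b := n - 1 - 2 * (m.1.1 + m.1.2)) (by omega) ((x (shiftA m)).1) -
         m.1.1 • famCast C (a := n + 1 - 2 * (m.1.1 + (m.1.2 + 1)))
            (b := n - 1 - 2 * (m.1.1 + m.1.2)) (by omega) ((x (shiftB m)).1))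

section Helpers

variable {F : ℤ → Type*} [∀ n, AddCommGroup (F n)] [∀ n, Module ℚ (F n)]

lemma fc_fc {a b c : ℤ} (h1 : a = b) (h2 : b = c) (x : F a) :
    famCast F h2 (famCast F h1 x) = famCast F (h1.trans h2) x := by
  subst h1; subst h2; rfl

variable {C : ℤ → Type} [∀ n, AddCommGroup (C n)] [∀ n, Module ℚ (C n)]

lemma fc_d (d : ∀ n : ℤ, C n →ₗ[ℚ] C (n - 1)) {a b : ℤ} (h : a = b) (x : C a) :
    d b (famCast C h x) = famCast C (congrArg (· - 1) h) (d a x) := by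
  subst h; rfl

lemma fc_pi_fst {a b : ℤ} (h : a = b) (x : TF C a) (m : SIdx) :
    ((famCast (TF C) h x) m).1 =
      famCast C (show a + 1 - 2 * (m.1.1 + m.1.2) = b + 1 - 2 * (m.1.1 + m.1.2) by rw [h])
        ((x m).1) := by
  subst h; rfl

lemma fc_pi_snd {a b : ℤ} (h : a = b) (x : TF C a) (m : SIdx) :
    ((famCast (TF C) h x) m).2 =
      famCast C (show a - 2 * (m.1.1 + m.1.2) = b - 2 * (m.1.1 + m.1.2) by rw [h])
        ((x m).2) := by
  subst h; rfl

lemma shiftA_fst (m : SIdx) : (shiftA m).1.1 = m.1.1 + 1 := rfl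
lemma shiftA_snd (m : SIdx) : (shiftA m).1.2 = m.1.2 := rfl
lemma shiftB_fst (m : SIdx) : (shiftB m).1.1 = m.1.1 := rfl
lemma shiftB_snd (m : SIdx) : (shiftB m).1.2 = m.1.2 + 1 := rfl

end Helpers

/-- for a chain complex `(C_*, d)` with twisted complex `(T_*, D)`, the operator
`u : T_n → T_{n−2}`, `(ux)_{m₁,m₂,i} = x_{m₁+1,m₂,i} + x_{m₁,m₂+1,i}`, is a chain map:
`D ∘ u = u ∘ D`. -/
theorem stmt5 (C : ℤ → Type) [∀ n, AddCommGroup (C n)] [∀ n, Module ℚ (C n)]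
    (d : ∀ n : ℤ, C n →ₗ[ℚ] C (n - 1)) (hd : ∀ (n : ℤ) (x : C n), d (n - 1) (d n x) = 0)
    (D : ∀ n : ℤ, TF C n →ₗ[ℚ] TF C (n - 1)) (hD : IsTwisted C d D)
    (u : ∀ n : ℤ, TF C n →ₗ[ℚ] TF C (n - 2))
    (hu : ∀ (n : ℤ) (x : TF C n) (m : SIdx),
      (u n x m).1 =
        famCast C (a := n + 1 - 2 * ((m.1.1 + 1) + m.1.2))
          (b := n - 2 + 1 - 2 * (m.1.1 + m.1.2)) (by omega) ((x (shiftA m)).1) +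
        famCast C (a := n + 1 - 2 * (m.1.1 + (m.1.2 + 1)))
          (b := n - 2 + 1 - 2 * (m.1.1 + m.1.2)) (by omega) ((x (shiftB m)).1) ∧
      (u n x m).2 =
        famCast C (a := n - 2 * ((m.1.1 + 1) + m.1.2))
          (b := n - 2 - 2 * (m.1.1 + m.1.2)) (by omega) ((x (shiftA m)).2) +
        famCast C (a := n - 2 * (m.1.1 + (m.1.2 + 1)))
          (b := n - 2 - 2 * (m.1.1 + m.1.2)) (by omega) ((x (shiftB m)).2)) :
    ∀ (n : ℤ) (x : TF C n),
      D (n - 2) (u n x) = famCast (TF C) (show n - 1 - 2 = n - 2 - 1 by omega)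
        (u (n - 1) (D n x)) := by
  intro n x
  have hs : ((-1 : ℚ)) ^ (n - 2) = (-1) ^ n := by
    rw [zpow_sub₀ (by norm_num : (-1 : ℚ) ≠ 0)]; norm_num
  refine DFinsupp.ext fun m => ?_
  obtain ⟨hL1, hL2⟩ := hD (n - 2) (u n x) m
  have key : ∀ y : TF C n, (y (shiftA (shiftB m))).1 = (y (shiftB (shiftA m))).1 :=
    fun _ => rfl
  refine Prod.ext ?_ ?_
  · rw [hL1, fc_pi_fst, (hu n x m).1, (hu (n - 1) (D n x) m).1,
      (hD n x (shiftA m)).1, (hD n x (shiftB m)).1]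
    delta shiftA shiftB
    simp only [shiftA_fst, shiftA_snd, shiftB_fst, shiftB_snd, map_add, fc_d, fc_fc]
  · rw [hL2, fc_pi_snd, (hu n x m).2, (hu (n - 1) (D n x) m).2,
      (hD n x (shiftA m)).2, (hD n x (shiftB m)).2,
      (hu n x (shiftA m)).1, (hu n x (shiftB m)).1, hs, key x]
    delta shiftA shiftB
    simp only [shiftA_fst, shiftA_snd, shiftB_fst, shiftB_snd,
      map_add, map_sub, map_smul, map_zsmul, fc_d, fc_fc]
    module

end
end

section
/- Let k ≥ 1 be an integer and let T : ℚᵏ → ℚ^{k−1} be the ℚ-linear map defined by T(a₁,…,a_k)_j := (k−j)·a_{j+1} − j·a_j for 1 ≤ j ≤ k−1. Then T is surjective, and the kernel of T is one-dimensional, spanned by the vector v with v_j := (j−1)!·(k−j)! for 1 ≤ j ≤ k. -/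
/-!
For `a` in the kernel, the `j`-th equation `(k-j)·a_{j+1} = j·a_j` has a nonzero coefficient in
front of `a_{j+1}`, so `a` is determined by `a_1`: the kernel is at most one-dimensional, and it
contains `v` because of the factorial identity `(k-j)·j!·(k-j-1)! = j·(j-1)!·(k-j)!`. Surjectivity
then follows from rank–nullity, as `dim ℚᵏ - 1 = dim ℚ^{k-1}`.
-/

open Module Nat

theorem Nat.sub_mul_factorial_mul_factorial_sub_succ {n j : ℕ} (hj : j < n) :
    (n - j) * ((j + 1)! * (n - (j + 1))!) = (j + 1) * (j ! * (n - j)!) := by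
  rw [show n - j = n - (j + 1) + 1 by omega, Nat.factorial_succ, Nat.factorial_succ (n - (j + 1))]
  ring

section Bidiagonal

variable {K : Type*} [Field K] {n : ℕ} {c d : Fin n → K}
  {T : (Fin (n + 1) → K) →ₗ[K] (Fin n → K)}

theorem mem_ker_iff_of_bidiagonal (hT : ∀ a j, T a j = c j * a j.succ - d j * a j.castSucc)
    {a : Fin (n + 1) → K} : a ∈ LinearMap.ker T ↔ ∀ j, c j * a j.succ = d j * a j.castSucc := by
  simp only [LinearMap.mem_ker, funext_iff, hT, Pi.zero_apply, sub_eq_zero]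

theorem eq_zero_of_mul_succ_eq_mul_castSucc (hc : ∀ j, c j ≠ 0) {a : Fin (n + 1) → K}
    (ha : ∀ j, c j * a j.succ = d j * a j.castSucc) (h0 : a 0 = 0) : a = 0 := by
  ext i
  induction i using Fin.induction with
  | zero => exact h0
  | succ j ih =>
    have := ha j
    rw [ih, Pi.zero_apply, mul_zero] at this
    exact (mul_eq_zero.mp this).resolve_left (hc j)

theorem ker_eq_span_singleton_of_bidiagonal (hc : ∀ j, c j ≠ 0)
    (hT : ∀ a j, T a j = c j * a j.succ - d j * a j.castSucc) {v : Fin (n + 1) → K}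
    (hv : v ∈ LinearMap.ker T) (hv0 : v 0 ≠ 0) : LinearMap.ker T = K ∙ v := by
  refine le_antisymm (fun a ha ↦ Submodule.mem_span_singleton.mpr ⟨a 0 / v 0, ?_⟩)
    ((Submodule.span_singleton_le_iff_mem _ _).mpr hv)
  have hb : a - (a 0 / v 0) • v ∈ LinearMap.ker T := sub_mem ha (Submodule.smul_mem _ _ hv)
  have hb0 : (a - (a 0 / v 0) • v) 0 = 0 := by
    simp [div_mul_cancel₀ _ hv0]
  exact (sub_eq_zero.mp
    (eq_zero_of_mul_succ_eq_mul_castSucc hc ((mem_ker_iff_of_bidiagonal hT).mp hb) hb0)).symm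

end Bidiagonal

theorem LinearMap.surjective_of_finrank_eq_add_finrank_ker {K V W : Type*} [DivisionRing K]
    [AddCommGroup V] [Module K V] [FiniteDimensional K V] [AddCommGroup W] [Module K W]
    [FiniteDimensional K W] (T : V →ₗ[K] W)
    (h : finrank K V = finrank K W + finrank K (LinearMap.ker T)) : Function.Surjective T := by
  rw [← LinearMap.range_eq_top]
  apply Submodule.eq_top_of_finrank_eq
  have := T.finrank_range_add_finrank_ker
  omega

/-- the map `T : ℚᵏ → ℚ^{k−1}`, `T(a)_j = (k−j)·a_{j+1} − j·a_j`
(for `1 ≤ j ≤ k−1`, here written with `0`-based indices), is surjective and its kernel is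
one-dimensional, spanned by `v` with `v_j = (j−1)!·(k−j)!` (`1 ≤ j ≤ k`). -/
theorem stmt6 (k : ℕ) (hk : 1 ≤ k) (T : (Fin k → ℚ) →ₗ[ℚ] (Fin (k - 1) → ℚ))
    (hT : ∀ (a : Fin k → ℚ) (j : Fin (k - 1)),
      T a j = ((k : ℚ) - (j.val + 1)) * a ⟨j.val + 1, by have := j.isLt; omega⟩ -
        ((j.val : ℚ) + 1) * a ⟨j.val, by have := j.isLt; omega⟩) :
    Function.Surjective T ∧
    LinearMap.ker T = Submodule.span ℚ
      {fun j : Fin k => ((Nat.factorial j.val : ℚ) * (Nat.factorial (k - 1 - j.val) : ℚ))} ∧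
    Module.finrank ℚ ↥(LinearMap.ker T) = 1 := by
  obtain ⟨n, rfl⟩ : ∃ n, k = n + 1 := ⟨k - 1, by omega⟩
  set v : Fin (n + 1) → ℚ := fun j ↦ (j.val ! : ℚ) * ((n + 1 - 1 - j.val)! : ℚ)
  have hc : ∀ j : Fin n, ((n + 1 : ℕ) : ℚ) - (j.val + 1) ≠ 0 := fun j ↦ by
    have := j.isLt
    rw [sub_ne_zero]
    exact_mod_cast (by omega : n + 1 ≠ j.val + 1)
  have hv : v ∈ LinearMap.ker T := (mem_ker_iff_of_bidiagonal hT).mpr fun j ↦ by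
    have hj := j.isLt
    simp only [v, Fin.val_succ, Fin.val_castSucc, Nat.add_sub_cancel]
    rw [show ((n + 1 : ℕ) : ℚ) - (j.val + 1) = ((n - j.val : ℕ) : ℚ) by push_cast [hj.le]; ring]
    exact_mod_cast Nat.sub_mul_factorial_mul_factorial_sub_succ hj
  have hv0 : v 0 ≠ 0 := by positivity
  have hker := ker_eq_span_singleton_of_bidiagonal hc hT hv hv0
  have hrank : finrank ℚ (LinearMap.ker T) = 1 := by
    rw [hker, finrank_span_singleton (fun h ↦ hv0 (congrFun h 0))]
  refine ⟨T.surjective_of_finrank_eq_add_finrank_ker ?_, hker, hrank⟩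
  simp [hrank]
end

section
/- Let Ω ∈ 𝒮², let ε > 0, and set a := max_{(x₁,x₂) ∈ Ω} min{x₁,x₂}. Then there exists Ω' ∈ 𝒮² which is concave (i.e. (ℝ_{>0})² \ Ω' is a convex subset of ℝ²) such that Ω ⊂ Ω' and Ω' ⊂ {(x₁,x₂) ∈ (ℝ_{≥0})² : min{x₁,x₂} ≤ a + ε}. -/
open Set Real

noncomputable section

section AuxStmt11

/-- First linear functional. -/
def l1 (c R : ℝ) (p : Pt) : ℝ := p.1 / R + p.2 / c

/-- Second linear functional. -/
def l2 (c R : ℝ) (p : Pt) : ℝ := p.1 / c + p.2 / R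

/-- The defining (convex) function of the complement. -/
def Gf (c R : ℝ) (q : ℕ) (p : Pt) : ℝ := (l1 c R p)⁻¹ ^ q + (l2 c R p)⁻¹ ^ q

/-- Radial function of `Ω'`. -/
def rad (c R : ℝ) (q : ℕ) (z : Pt) : ℝ := (Gf c R q z / 2) ^ ((q : ℝ)⁻¹)

/-- The set `Ω'`. -/
def Om (c R : ℝ) (q : ℕ) : Set Pt :=
  {p | ∃ z ∈ Sigma2, ∃ t : ℝ, 0 ≤ t ∧ t ≤ rad c R q z ∧ p = t • z}

lemma sigma2_facts {z : Pt} (hz : z ∈ Sigma2) :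
    0 ≤ z.1 ∧ 0 ≤ z.2 ∧ z ≠ 0 ∧ z.1 ≤ 1 ∧ z.2 ≤ 1 := by
  obtain ⟨h1, h2, h3⟩ := hz
  refine ⟨h1, h2, ?_, ?_, ?_⟩
  · intro h
    rw [h] at h3
    norm_num at h3
  · nlinarith [sq_nonneg z.2]
  · nlinarith [sq_nonneg z.1]

lemma l1_pos {c R : ℝ} (hc : 0 < c) (hR : 0 < R) {p : Pt}
    (h1 : 0 ≤ p.1) (h2 : 0 ≤ p.2) (h0 : p ≠ 0) : 0 < l1 c R p := by
  have hne : 0 < p.1 ∨ 0 < p.2 := by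
    by_contra h
    push_neg at h
    exact h0 (Prod.ext (le_antisymm h.1 h1) (le_antisymm h.2 h2))
  rcases hne with h | h
  · exact add_pos_of_pos_of_nonneg (div_pos h hR) (div_nonneg h2 hc.le)
  · exact add_pos_of_nonneg_of_pos (div_nonneg h1 hR.le) (div_pos h hc)

lemma l2_pos {c R : ℝ} (hc : 0 < c) (hR : 0 < R) {p : Pt}
    (h1 : 0 ≤ p.1) (h2 : 0 ≤ p.2) (h0 : p ≠ 0) : 0 < l2 c R p := by
  have hne : 0 < p.1 ∨ 0 < p.2 := by
    by_contra h
    push_neg at h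
    exact h0 (Prod.ext (le_antisymm h.1 h1) (le_antisymm h.2 h2))
  rcases hne with h | h
  · exact add_pos_of_pos_of_nonneg (div_pos h hc) (div_nonneg h2 hR.le)
  · exact add_pos_of_nonneg_of_pos (div_nonneg h1 hc.le) (div_pos h hR)

lemma Gf_pos {c R : ℝ} {q : ℕ} (hc : 0 < c) (hR : 0 < R) {p : Pt}
    (h1 : 0 ≤ p.1) (h2 : 0 ≤ p.2) (h0 : p ≠ 0) : 0 < Gf c R q p :=
  add_pos (pow_pos (inv_pos.2 (l1_pos hc hR h1 h2 h0)) q)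
    (pow_pos (inv_pos.2 (l2_pos hc hR h1 h2 h0)) q)

lemma Gf_smul (c R : ℝ) (q : ℕ) (t : ℝ) (z : Pt) :
    Gf c R q (t • z) = (t ^ q)⁻¹ * Gf c R q z := by
  have e1 : l1 c R (t • z) = t * l1 c R z := by
    simp only [l1, Prod.smul_fst, Prod.smul_snd, smul_eq_mul]
    ring
  have e2 : l2 c R (t • z) = t * l2 c R z := by
    simp only [l2, Prod.smul_fst, Prod.smul_snd, smul_eq_mul]
    ring
  simp only [Gf, e1, e2, mul_inv, mul_pow, inv_pow]
  ring

lemma rad_nonneg {c R : ℝ} {q : ℕ} {z : Pt} (hG : 0 ≤ Gf c R q z) :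
    0 ≤ rad c R q z :=
  Real.rpow_nonneg (by linarith) _

lemma pow_rad {c R : ℝ} {q : ℕ} {z : Pt} (hq : q ≠ 0) (hG : 0 < Gf c R q z) :
    rad c R q z ^ q = Gf c R q z / 2 := by
  have h2 : (0:ℝ) ≤ Gf c R q z / 2 := by linarith
  rw [rad, ← Real.rpow_natCast ((Gf c R q z / 2) ^ ((q : ℝ)⁻¹)) q,
    ← Real.rpow_mul h2, inv_mul_cancel₀ (by exact_mod_cast hq), Real.rpow_one]

lemma le_rad_iff {c R : ℝ} {q : ℕ} {z : Pt} (hq : q ≠ 0) (hG : 0 < Gf c R q z)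
    {t : ℝ} (ht : 0 ≤ t) : t ≤ rad c R q z ↔ t ^ q ≤ Gf c R q z / 2 := by
  rw [← pow_rad hq hG]
  exact (pow_le_pow_iff_left₀ ht (rad_nonneg (by linarith)) hq).symm

lemma Gf_ge_of_mem {c R : ℝ} {q : ℕ} (hc : 0 < c) (hR : 0 < R) (hq : q ≠ 0)
    {p : Pt} (hp : p ∈ Om c R q) (hp0 : p ≠ 0) : 2 ≤ Gf c R q p := by
  obtain ⟨z, hz, t, ht0, htr, rfl⟩ := hp
  obtain ⟨hz1, hz2, hz0, -, -⟩ := sigma2_facts hz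
  have hG : 0 < Gf c R q z := Gf_pos hc hR hz1 hz2 hz0
  have ht : 0 < t := by
    rcases ht0.lt_or_eq with h | h
    · exact h
    · exact absurd (by rw [← h, zero_smul]) hp0
  have h := (le_rad_iff hq hG ht0).1 htr
  have htq : 0 < t ^ q := pow_pos ht q
  rw [Gf_smul]
  calc (2:ℝ) = (t ^ q)⁻¹ * (2 * t ^ q) := by field_simp
  _ ≤ (t ^ q)⁻¹ * Gf c R q z :=
      mul_le_mul_of_nonneg_left (by linarith) (inv_nonneg.2 htq.le)

lemma mem_of_Gf_ge {c R : ℝ} {q : ℕ} (hc : 0 < c) (hR : 0 < R) (hq : q ≠ 0)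
    {z : Pt} {t : ℝ} (hz : z ∈ Sigma2) (ht0 : 0 ≤ t)
    (h2 : 2 ≤ Gf c R q (t • z)) : t • z ∈ Om c R q := by
  obtain ⟨hz1, hz2, hz0, -, -⟩ := sigma2_facts hz
  have hG : 0 < Gf c R q z := Gf_pos hc hR hz1 hz2 hz0
  rcases ht0.lt_or_eq with ht | ht
  · refine ⟨z, hz, t, ht0, ?_, rfl⟩
    rw [le_rad_iff hq hG ht0]
    rw [Gf_smul] at h2
    have htq : 0 < t ^ q := pow_pos ht q
    have := mul_le_mul_of_nonneg_right h2 htq.le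
    rw [mul_comm ((t ^ q)⁻¹) _, mul_assoc, inv_mul_cancel₀ htq.ne', mul_one] at this
    linarith
  · exact ⟨z, hz, 0, le_refl 0, rad_nonneg hG.le, by rw [← ht]⟩

lemma rad_contDiffOn {c R : ℝ} {q : ℕ} (hc : 0 < c) (hR : 0 < R) :
    ContDiffOn ℝ (⊤ : ℕ∞) (rad c R q) Sigma2 := by
  intro z hz
  obtain ⟨hz1, hz2, hz0, -, -⟩ := sigma2_facts hz
  apply ContDiffAt.contDiffWithinAt
  have hl1 : ContDiffAt ℝ (⊤ : ℕ∞) (l1 c R) z :=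
    ((contDiff_fst.div_const R).add (contDiff_snd.div_const c)).contDiffAt
  have hl2 : ContDiffAt ℝ (⊤ : ℕ∞) (l2 c R) z :=
    ((contDiff_fst.div_const c).add (contDiff_snd.div_const R)).contDiffAt
  have hG : ContDiffAt ℝ (⊤ : ℕ∞) (fun p => Gf c R q p / 2) z := by
    exact (((hl1.inv (l1_pos hc hR hz1 hz2 hz0).ne').pow q).add
      ((hl2.inv (l2_pos hc hR hz1 hz2 hz0).ne').pow q)).div_const 2
  have hGpos : 0 < Gf c R q z / 2 := by
    have := Gf_pos (q := q) hc hR hz1 hz2 hz0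
    linarith
  exact hG.rpow_const_of_ne hGpos.ne'

lemma Gf_convexOn {c R : ℝ} {q : ℕ} (hc : 0 < c) (hR : 0 < R) :
    ConvexOn ℝ posQuad (Gf c R q) := by
  have hposQuad : Convex ℝ posQuad := by
    have : posQuad = (Ioi (0:ℝ)) ×ˢ (Ioi (0:ℝ)) := rfl
    rw [this]
    exact (convex_Ioi 0).prod (convex_Ioi 0)
  have key : ∀ (u v : ℝ), (∀ p : Pt, 0 < p.1 → 0 < p.2 → 0 < u * p.1 + v * p.2) →
      (0 ≤ u) → (0 ≤ v) →
      ConvexOn ℝ posQuad (fun p : Pt => (u * p.1 + v * p.2)⁻¹ ^ q) := by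
    intro u v hpos hu hv
    refine ⟨hposQuad, ?_⟩
    intro x hx y hy α β hα hβ hαβ
    have hx' : u * x.1 + v * x.2 ∈ Ioi (0:ℝ) := hpos x hx.1 hx.2
    have hy' : u * y.1 + v * y.2 ∈ Ioi (0:ℝ) := hpos y hy.1 hy.2
    have h := (convexOn_zpow (𝕜 := ℝ) (-(q:ℤ))).2 hx' hy' hα hβ hαβ
    dsimp only at h ⊢
    have e : ∀ w : ℝ, 0 < w → w ^ (-(q:ℤ)) = w⁻¹ ^ q := by
      intro w hw
      rw [zpow_neg, zpow_natCast, inv_pow]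
    rw [e _ hx', e _ hy'] at h
    have elin : u * (α • x + β • y).1 + v * (α • x + β • y).2 =
        α • (u * x.1 + v * x.2) + β • (u * y.1 + v * y.2) := by
      simp only [Prod.fst_add, Prod.snd_add, Prod.smul_fst, Prod.smul_snd,
        smul_eq_mul]
      ring
    have hmem : α • x + β • y ∈ posQuad := hposQuad hx hy hα hβ hαβ
    have hcombo : (0:ℝ) < α • (u * x.1 + v * x.2) + β • (u * y.1 + v * y.2) := by
      rw [← elin]
      exact hpos _ hmem.1 hmem.2
    calc (u * (α • x + β • y).1 + v * (α • x + β • y).2)⁻¹ ^ q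
        = (α • (u * x.1 + v * x.2) + β • (u * y.1 + v * y.2)) ^ (-(q:ℤ)) := by
          rw [elin, e _ hcombo]
    _ ≤ α • (u * x.1 + v * x.2)⁻¹ ^ q + β • (u * y.1 + v * y.2)⁻¹ ^ q := h
  have h1 : ConvexOn ℝ posQuad (fun p : Pt => (l1 c R p)⁻¹ ^ q) := by
    have := key R⁻¹ c⁻¹ (fun p hp1 hp2 => by positivity) (by positivity) (by positivity)
    convert this using 2 with p
    simp only [l1, div_eq_mul_inv]
    ring_nf
  have h2 : ConvexOn ℝ posQuad (fun p : Pt => (l2 c R p)⁻¹ ^ q) := by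
    have := key c⁻¹ R⁻¹ (fun p hp1 hp2 => by positivity) (by positivity) (by positivity)
    convert this using 2 with p
    simp only [l2, div_eq_mul_inv]
    ring_nf
  exact h1.add h2

end AuxStmt11

/-- for `Ω ∈ 𝒮²`, `ε > 0` and `a := max_{(x₁,x₂) ∈ Ω} min(x₁,x₂)`, there is a
concave `Ω' ∈ 𝒮²` with `Ω ⊆ Ω'` and `Ω' ⊆ {(x₁,x₂) ∈ (ℝ_{≥0})² : min(x₁,x₂) ≤ a + ε}`. -/
theorem stmt11 (Ω : Set Pt) (r : Pt → ℝ) (hΩ : IsToricBase Ω r) (ε : ℝ) (hε : 0 < ε)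
    (a : ℝ) (ha : IsGreatest ((fun p : Pt => min p.1 p.2) '' Ω) a) :
    ∃ (Ω' : Set Pt) (r' : Pt → ℝ), IsToricBase Ω' r' ∧ Convex ℝ (UStar Ω') ∧
      Ω ⊆ Ω' ∧ Ω' ⊆ {p ∈ nonnegQuad | min p.1 p.2 ≤ a + ε} := by
  obtain ⟨hr_smooth, hr_pos, hΩeq⟩ := hΩ
  -- compactness of `Σ²`
  have hSclosed : IsClosed Sigma2 := by
    have heq : Sigma2 = {v : Pt | 0 ≤ v.1} ∩
        ({v : Pt | 0 ≤ v.2} ∩ {v : Pt | v.1 ^ 2 + v.2 ^ 2 = 1}) := by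
      ext v; simp [Sigma2, and_assoc]
    rw [heq]
    exact (isClosed_le continuous_const continuous_fst).inter
      ((isClosed_le continuous_const continuous_snd).inter
        (isClosed_eq ((continuous_fst.pow 2).add (continuous_snd.pow 2)) continuous_const))
  have hSsub : Sigma2 ⊆ Metric.closedBall (0 : Pt) 1 := by
    intro z hz
    obtain ⟨h1, h2, h0, hle1, hle2⟩ := sigma2_facts hz
    rw [Metric.mem_closedBall, dist_zero_right, Prod.norm_def]
    apply max_le <;> rw [Real.norm_eq_abs, abs_le] <;> constructor <;> linarith
  have hScompact : IsCompact Sigma2 :=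
    (isCompact_closedBall (0 : Pt) 1).of_isClosed_subset hSclosed hSsub
  have hSne : Sigma2.Nonempty := ⟨(1, 0), by norm_num [Sigma2]⟩
  obtain ⟨zmax, hzmax, hM₀⟩ := hScompact.exists_isMaxOn hSne hr_smooth.continuousOn
  set M : ℝ := max (r zmax) 1 with hMdef
  have hM1 : (1 : ℝ) ≤ M := le_max_right _ _
  have hM0 : (0 : ℝ) < M := lt_of_lt_of_le one_pos hM1
  -- bounds for points of `Ω`
  have hΩbound : ∀ p ∈ Ω, 0 ≤ p.1 ∧ 0 ≤ p.2 ∧ p.1 ≤ M ∧ p.2 ≤ M := by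
    intro p hp
    rw [hΩeq] at hp
    obtain ⟨z, hz, t, ht0, htr, rfl⟩ := hp
    obtain ⟨h1, h2, h0, hle1, hle2⟩ := sigma2_facts hz
    have htM : t ≤ M := le_trans (le_trans htr (hM₀ hz)) (le_max_left _ _)
    have e1 : (t • z).1 = t * z.1 := rfl
    have e2 : (t • z).2 = t * z.2 := rfl
    rw [e1, e2]
    refine ⟨mul_nonneg ht0 h1, mul_nonneg ht0 h2, ?_, ?_⟩
    · nlinarith
    · nlinarith
  -- `a ≥ 0`
  obtain ⟨p₀, hp₀, hp₀a⟩ := ha.1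
  have ha0 : 0 ≤ a := by
    obtain ⟨h1, h2, -, -⟩ := hΩbound p₀ hp₀
    rw [← hp₀a]; exact le_min h1 h2
  -- constants
  set b : ℝ := a + ε with hbdef
  have hb : 0 < b := by positivity
  have hab : a / b < 1 := (div_lt_one hb).2 (by linarith)
  have hab0 : 0 ≤ a / b := div_nonneg ha0 hb.le
  set s : ℝ := (a / b + 1) / 2 with hsdef
  have hs1 : s < 1 := by rw [hsdef]; linarith
  have hs0 : 0 < s := by rw [hsdef]; linarith
  have hsab : a / b < s := by rw [hsdef]; linarith
  obtain ⟨q, hq⟩ := exists_pow_lt_of_lt_one (x := (1 : ℝ) / 2) (y := s) (by norm_num) hs1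
  have hqne : q ≠ 0 := by
    intro h; rw [h, pow_zero] at hq; norm_num at hq
  set d : ℝ := s - a / b with hddef
  have hd : 0 < d := by rw [hddef]; linarith
  set R : ℝ := M / d with hRdef
  have hR : 0 < R := div_pos hM0 hd
  have hMR : M / R = d := by
    rw [hRdef, div_div_eq_mul_div, mul_comm, mul_div_assoc, div_self hM0.ne', mul_one]
  refine ⟨Om b R q, rad b R q, ⟨rad_contDiffOn hb hR, ?_, rfl⟩, ?_, ?_, ?_⟩
  · -- positivity of the radial function
    intro z hz
    obtain ⟨h1, h2, h0, -, -⟩ := sigma2_facts hz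
    have := Gf_pos (q := q) hb hR h1 h2 h0
    exact Real.rpow_pos_of_pos (by linarith) _
  · -- convexity of the complement
    have hset : UStar (Om b R q) = {p ∈ posQuad | Gf b R q p < 2} := by
      ext p
      constructor
      · rintro ⟨hpos, hnot⟩
        refine ⟨hpos, ?_⟩
        by_contra hge
        push_neg at hge
        have hn2 : (0 : ℝ) < p.1 ^ 2 + p.2 ^ 2 := by
          have := hpos.1; positivity
        set n : ℝ := Real.sqrt (p.1 ^ 2 + p.2 ^ 2) with hndef
        have hn : 0 < n := Real.sqrt_pos.2 hn2
        have hzS : (n⁻¹ • p) ∈ Sigma2 := by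
          refine ⟨?_, ?_, ?_⟩
          · exact mul_nonneg (inv_nonneg.2 hn.le) hpos.1.le
          · exact mul_nonneg (inv_nonneg.2 hn.le) hpos.2.le
          · have e1 : (n⁻¹ • p).1 = n⁻¹ * p.1 := rfl
            have e2 : (n⁻¹ • p).2 = n⁻¹ * p.2 := rfl
            have hsq : n ^ 2 = p.1 ^ 2 + p.2 ^ 2 := Real.sq_sqrt hn2.le
            rw [e1, e2]
            field_simp
            linarith [hsq]
        have hpn : p = n • (n⁻¹ • p) := by
          rw [smul_smul, mul_inv_cancel₀ hn.ne', one_smul]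
        have hmem : n • (n⁻¹ • p) ∈ Om b R q :=
          mem_of_Gf_ge hb hR hqne hzS hn.le (by rw [← hpn]; exact hge)
        rw [← hpn] at hmem
        exact hnot hmem
      · rintro ⟨hpos, hlt⟩
        refine ⟨hpos, fun hmem => ?_⟩
        have hp0 : p ≠ 0 := by
          intro h; rw [h] at hpos; exact lt_irrefl 0 hpos.1
        have := Gf_ge_of_mem hb hR hqne hmem hp0
        linarith
    rw [hset]
    exact (Gf_convexOn hb hR).convex_lt 2
  · -- `Ω ⊆ Ω'`
    intro p hp
    have hmin : min p.1 p.2 ≤ a := ha.2 ⟨p, hp, rfl⟩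
    obtain ⟨hb1, hb2, hb3, hb4⟩ := hΩbound p hp
    rw [hΩeq] at hp
    obtain ⟨z, hz, t, ht0, htr, rfl⟩ := hp
    obtain ⟨h1, h2, h0, -, -⟩ := sigma2_facts hz
    rcases ht0.lt_or_eq with ht | ht
    · -- positive `t`: show `2 ≤ Gf (t • z)`
      have hp0 : t • z ≠ 0 := by
        intro h
        rcases smul_eq_zero.1 h with h' | h'
        · exact ht.ne' h'
        · exact h0 h'
      apply mem_of_Gf_ge hb hR hqne hz ht0
      have hl1pos : 0 < l1 b R (t • z) := l1_pos hb hR hb1 hb2 hp0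
      have hl2pos : 0 < l2 b R (t • z) := l2_pos hb hR hb1 hb2 hp0
      have key : ∀ x : ℝ, 0 < x → x ≤ s → 2 ≤ x⁻¹ ^ q := by
        intro x hx hxs
        have hxq : 0 < x ^ q := pow_pos hx q
        have hpow : x ^ q ≤ s ^ q := pow_le_pow_left₀ hx.le hxs q
        have hhalf : x ^ q < 1 / 2 := lt_of_le_of_lt hpow hq
        rw [inv_pow]
        nlinarith [inv_pos.2 hxq, mul_inv_cancel₀ hxq.ne']
      rcases le_total (t • z).2 (t • z).1 with hcase | hcase
      · -- second coordinate is the min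
        have hp2a : (t • z).2 ≤ a := by
          rw [min_eq_right hcase] at hmin; exact hmin
        have hl1s : l1 b R (t • z) ≤ s := by
          have e1 : (t • z).1 / R ≤ M / R := (div_le_div_iff_of_pos_right hR).2 hb3
          have e2 : (t • z).2 / b ≤ a / b := (div_le_div_iff_of_pos_right hb).2 hp2a
          rw [hMR] at e1
          have : l1 b R (t • z) = (t • z).1 / R + (t • z).2 / b := rfl
          rw [this, hddef] at *
          linarith
        have h2' : 2 ≤ (l1 b R (t • z))⁻¹ ^ q := key _ hl1pos hl1s
        have hnn : 0 ≤ (l2 b R (t • z))⁻¹ ^ q := by positivity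
        have : 2 ≤ Gf b R q (t • z) := by rw [Gf]; linarith
        exact this
      · -- first coordinate is the min
        have hp1a : (t • z).1 ≤ a := by
          rw [min_eq_left hcase] at hmin; exact hmin
        have hl2s : l2 b R (t • z) ≤ s := by
          have e1 : (t • z).2 / R ≤ M / R := (div_le_div_iff_of_pos_right hR).2 hb4
          have e2 : (t • z).1 / b ≤ a / b := (div_le_div_iff_of_pos_right hb).2 hp1a
          rw [hMR] at e1
          have : l2 b R (t • z) = (t • z).1 / b + (t • z).2 / R := rfl
          rw [this, hddef] at *
          linarith
        have h2' : 2 ≤ (l2 b R (t • z))⁻¹ ^ q := key _ hl2pos hl2s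
        have hnn : 0 ≤ (l1 b R (t • z))⁻¹ ^ q := by positivity
        have : 2 ≤ Gf b R q (t • z) := by rw [Gf]; linarith
        exact this
    · -- `t = 0`
      have hG : 0 < Gf b R q z := Gf_pos hb hR h1 h2 h0
      exact ⟨z, hz, 0, le_refl 0, rad_nonneg hG.le, by rw [← ht]⟩
  · -- `Ω' ⊆ {min ≤ a + ε}`
    intro p hp
    have hp' := hp
    obtain ⟨z, hz, t, ht0, htr, rfl⟩ := hp
    obtain ⟨h1, h2, h0, -, -⟩ := sigma2_facts hz
    have e1 : (t • z).1 = t * z.1 := rfl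
    have e2 : (t • z).2 = t * z.2 := rfl
    have hnn : t • z ∈ nonnegQuad := by
      constructor
      · rw [e1]; exact mul_nonneg ht0 h1
      · rw [e2]; exact mul_nonneg ht0 h2
    refine ⟨hnn, ?_⟩
    by_contra hcon
    push_neg at hcon
    have hbmin : b < min (t • z).1 (t • z).2 := by rw [hbdef]; exact hcon
    have hc1 : b < (t • z).1 := lt_of_lt_of_le hbmin (min_le_left _ _)
    have hc2 : b < (t • z).2 := lt_of_lt_of_le hbmin (min_le_right _ _)
    have hp0 : t • z ≠ 0 := by
      intro h
      rw [h] at hc1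
      exact absurd hc1 (by norm_num; linarith)
    have hge := Gf_ge_of_mem hb hR hqne hp' hp0
    have hl1gt : 1 < l1 b R (t • z) := by
      have : 1 < (t • z).2 / b := (one_lt_div hb).2 hc2
      have hnn1 : 0 ≤ (t • z).1 / R := div_nonneg hnn.1 hR.le
      have : l1 b R (t • z) = (t • z).1 / R + (t • z).2 / b := rfl
      rw [this]
      have : 1 < (t • z).2 / b := (one_lt_div hb).2 hc2
      linarith
    have hl2gt : 1 < l2 b R (t • z) := by
      have : 1 < (t • z).1 / b := (one_lt_div hb).2 hc1
      have hnn2 : 0 ≤ (t • z).2 / R := div_nonneg hnn.2 hR.le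
      have : l2 b R (t • z) = (t • z).1 / b + (t • z).2 / R := rfl
      rw [this]
      have : 1 < (t • z).1 / b := (one_lt_div hb).2 hc1
      linarith
    have hi1 : (l1 b R (t • z))⁻¹ ^ q < 1 :=
      pow_lt_one₀ (inv_nonneg.2 (by linarith)) (inv_lt_one_of_one_lt₀ hl1gt) hqne
    have hi2 : (l2 b R (t • z))⁻¹ ^ q < 1 :=
      pow_lt_one₀ (inv_nonneg.2 (by linarith)) (inv_lt_one_of_one_lt₀ hl2gt) hqne
    have : Gf b R q (t • z) < 2 := by rw [Gf]; linarith
    linarith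

end
end

section
/- Let Ω ∈ 𝒮², let ε > 0, and set a := max_{(x₁,x₂) ∈ Ω} min{x₁,x₂}. Then there exist a point q = (q₁,q₂) ∈ (ℝ_{≥0})² with min{q₁,q₂} ≥ a − ε and a set Ω' ∈ 𝒮² which is weakly convex (i.e. Ω' is a convex subset of ℝ²) such that q ∈ Ω' and Ω' ⊂ Ω. -/
open Set Real

noncomputable section

/-- quadratic form of the ellipse with axes `L, B` along `z₀, z₀^⊥`. -/
def eQ (z₀ : Pt) (L B : ℝ) (p : Pt) : ℝ :=
  (p.1 * z₀.1 + p.2 * z₀.2) ^ 2 / L ^ 2 + (p.2 * z₀.1 - p.1 * z₀.2) ^ 2 / B ^ 2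

def eR (z₀ : Pt) (L B : ℝ) (p : Pt) : ℝ := (Real.sqrt (eQ z₀ L B p))⁻¹

lemma master (Ω : Set Pt) (r : Pt → ℝ) (hΩ : IsToricBase Ω r)
    (z₀ : Pt) (hz₀ : z₀ ∈ Sigma2) (L B : ℝ) (hL : 0 < L) (hB : 0 < B)
    (hle : ∀ z ∈ Sigma2, eR z₀ L B z ≤ r z) :
    ∃ (Ω' : Set Pt) (r' : Pt → ℝ), IsToricBase Ω' r' ∧ Convex ℝ Ω' ∧ Ω' ⊆ Ω ∧
      ∀ t : ℝ, 0 ≤ t → t ≤ L → t • z₀ ∈ Ω' := by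
  set Q : Pt → ℝ := eQ z₀ L B with hQdef
  set r' : Pt → ℝ := eR z₀ L B with hr'def
  set Ω' : Set Pt := {p | ∃ z ∈ Sigma2, ∃ t : ℝ, 0 ≤ t ∧ t ≤ r' z ∧ p = t • z} with hΩ'def
  have hz₀u : z₀.1 ^ 2 + z₀.2 ^ 2 = 1 := hz₀.2.2
  have hQeq : ∀ p : Pt, Q p =
      (p.1 * z₀.1 + p.2 * z₀.2) ^ 2 / L ^ 2 + (p.2 * z₀.1 - p.1 * z₀.2) ^ 2 / B ^ 2 :=
    fun p => rfl
  -- positivity of Q on Sigma2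
  have hQpos : ∀ z ∈ Sigma2, 0 < Q z := by
    intro z hz
    have huv : (z.1 * z₀.1 + z.2 * z₀.2) ^ 2 + (z.2 * z₀.1 - z.1 * z₀.2) ^ 2 = 1 := by
      have : (z.1 * z₀.1 + z.2 * z₀.2) ^ 2 + (z.2 * z₀.1 - z.1 * z₀.2) ^ 2
          = (z.1 ^ 2 + z.2 ^ 2) * (z₀.1 ^ 2 + z₀.2 ^ 2) := by ring
      rw [this, hz.2.2, hz₀u, one_mul]
    set M := max L B with hM
    have hMpos : 0 < M := lt_max_of_lt_left hL
    have h1 : (z.1 * z₀.1 + z.2 * z₀.2) ^ 2 / M ^ 2 ≤ (z.1 * z₀.1 + z.2 * z₀.2) ^ 2 / L ^ 2 :=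
      div_le_div_of_nonneg_left (sq_nonneg _) (pow_pos hL 2)
        (pow_le_pow_left₀ hL.le (le_max_left L B) 2)
    have h2 : (z.2 * z₀.1 - z.1 * z₀.2) ^ 2 / M ^ 2 ≤ (z.2 * z₀.1 - z.1 * z₀.2) ^ 2 / B ^ 2 :=
      div_le_div_of_nonneg_left (sq_nonneg _) (pow_pos hB 2)
        (pow_le_pow_left₀ hB.le (le_max_right L B) 2)
    have hlow : 1 / M ^ 2 ≤ Q z := by
      have : (z.1 * z₀.1 + z.2 * z₀.2) ^ 2 / M ^ 2 + (z.2 * z₀.1 - z.1 * z₀.2) ^ 2 / M ^ 2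
          = 1 / M ^ 2 := by
        rw [← add_div, huv]
      rw [hQeq]
      linarith [add_le_add h1 h2]
    have : 0 < 1 / M ^ 2 := by positivity
    linarith
  have hr'pos : ∀ z ∈ Sigma2, 0 < r' z := by
    intro z hz
    exact inv_pos.2 (Real.sqrt_pos.2 (hQpos z hz))
  -- homogeneity
  have hQhom : ∀ (t : ℝ) (p : Pt), Q (t • p) = t ^ 2 * Q p := by
    intro t p
    rw [hQeq, hQeq]
    simp only [Prod.smul_fst, Prod.smul_snd, smul_eq_mul]
    ring
  -- set description
  have hset : Ω' = {p : Pt | (0 ≤ p.1 ∧ 0 ≤ p.2) ∧ Q p ≤ 1} := by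
    ext p
    constructor
    · rintro ⟨z, hz, t, ht0, htr, rfl⟩
      have hQz := hQpos z hz
      refine ⟨⟨?_, ?_⟩, ?_⟩
      · simpa using mul_nonneg ht0 hz.1
      · simpa using mul_nonneg ht0 hz.2.1
      · rw [hQhom]
        have h1 : t ^ 2 ≤ (r' z) ^ 2 := pow_le_pow_left₀ ht0 htr 2
        have h2 : (r' z) ^ 2 * Q z = 1 := by
          show ((Real.sqrt (Q z))⁻¹) ^ 2 * Q z = 1
          rw [inv_pow, Real.sq_sqrt hQz.le]
          exact inv_mul_cancel₀ hQz.ne'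
        calc t ^ 2 * Q z ≤ (r' z) ^ 2 * Q z := by
              exact mul_le_mul_of_nonneg_right h1 hQz.le
          _ = 1 := h2
    · rintro ⟨⟨h1, h2⟩, hQp⟩
      by_cases hp : p = 0
      · refine ⟨(1, 0), ⟨by norm_num, le_refl 0, by norm_num⟩, 0, le_refl 0,
          (hr'pos (1,0) ⟨by norm_num, le_refl 0, by norm_num⟩).le, by simp [hp]⟩
      · set n := Real.sqrt (p.1 ^ 2 + p.2 ^ 2) with hn
        have hpn : 0 < p.1 ^ 2 + p.2 ^ 2 := by
          rcases Prod.mk.injEq .. ▸ hp with h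
          have : p.1 ≠ 0 ∨ p.2 ≠ 0 := by
            by_contra hc
            push_neg at hc
            exact hp (Prod.ext hc.1 hc.2)
          rcases this with h | h
          · positivity
          · positivity
        have hnpos : 0 < n := Real.sqrt_pos.2 hpn
        have hz : (n⁻¹ • p) ∈ Sigma2 := by
          refine ⟨?_, ?_, ?_⟩
          · simpa using mul_nonneg (inv_nonneg.2 hnpos.le) h1
          · simpa using mul_nonneg (inv_nonneg.2 hnpos.le) h2
          · simp only [Prod.smul_fst, Prod.smul_snd, smul_eq_mul]
            have hn2 : n ^ 2 = p.1 ^ 2 + p.2 ^ 2 := Real.sq_sqrt hpn.le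
            field_simp
            linarith [hn2]
        refine ⟨n⁻¹ • p, hz, n, hnpos.le, ?_, by rw [smul_smul, mul_inv_cancel₀ hnpos.ne', one_smul]⟩
        -- n ≤ r' (n⁻¹ • p)
        have hQz : Q (n⁻¹ • p) = n⁻¹ ^ 2 * Q p := hQhom n⁻¹ p
        have hQzpos := hQpos _ hz
        have hQle : Q (n⁻¹ • p) ≤ n⁻¹ ^ 2 := by
          rw [hQz]
          nlinarith [sq_nonneg n⁻¹]
        show n ≤ (Real.sqrt (Q (n⁻¹ • p)))⁻¹
        have hs : Real.sqrt (Q (n⁻¹ • p)) ≤ n⁻¹ := by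
          calc Real.sqrt (Q (n⁻¹ • p)) ≤ Real.sqrt (n⁻¹ ^ 2) := Real.sqrt_le_sqrt hQle
            _ = n⁻¹ := Real.sqrt_sq (inv_nonneg.2 hnpos.le)
        have hspos : 0 < Real.sqrt (Q (n⁻¹ • p)) := Real.sqrt_pos.2 hQzpos
        calc n = (n⁻¹)⁻¹ := (inv_inv n).symm
          _ ≤ (Real.sqrt (Q (n⁻¹ • p)))⁻¹ := by
              exact inv_anti₀ hspos hs
  -- convexity
  have hconv : Convex ℝ Ω' := by
    rw [hset]
    intro x hx y hy α β hα hβ hsum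
    have hkey : ∀ s t : ℝ, (α * s + β * t) ^ 2 ≤ α * s ^ 2 + β * t ^ 2 := by
      intro s t
      nlinarith [mul_nonneg (mul_nonneg hα hβ) (sq_nonneg (s - t)), sq_nonneg (s - t)]
    constructor
    · constructor
      · simpa using add_nonneg (mul_nonneg hα hx.1.1) (mul_nonneg hβ hy.1.1)
      · simpa using add_nonneg (mul_nonneg hα hx.1.2) (mul_nonneg hβ hy.1.2)
    · show Q (α • x + β • y) ≤ 1
      have hu : (α • x + β • y).1 * z₀.1 + (α • x + β • y).2 * z₀.2
          = α * (x.1 * z₀.1 + x.2 * z₀.2) + β * (y.1 * z₀.1 + y.2 * z₀.2) := by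
        simp only [Prod.fst_add, Prod.snd_add, Prod.smul_fst, Prod.smul_snd, smul_eq_mul]
        ring
      have hv : (α • x + β • y).2 * z₀.1 - (α • x + β • y).1 * z₀.2
          = α * (x.2 * z₀.1 - x.1 * z₀.2) + β * (y.2 * z₀.1 - y.1 * z₀.2) := by
        simp only [Prod.fst_add, Prod.snd_add, Prod.smul_fst, Prod.smul_snd, smul_eq_mul]
        ring
      show eQ z₀ L B (α • x + β • y) ≤ 1
      unfold eQ
      rw [hu, hv]
      have hQx : eQ z₀ L B x ≤ 1 := hx.2
      have hQy : eQ z₀ L B y ≤ 1 := hy.2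
      unfold eQ at hQx hQy
      have e1 : (α * (x.1 * z₀.1 + x.2 * z₀.2) + β * (y.1 * z₀.1 + y.2 * z₀.2)) ^ 2 / L ^ 2
          ≤ (α * (x.1 * z₀.1 + x.2 * z₀.2) ^ 2 + β * (y.1 * z₀.1 + y.2 * z₀.2) ^ 2) / L ^ 2 := by
        gcongr
        exact hkey _ _
      have e2 : (α * (x.2 * z₀.1 - x.1 * z₀.2) + β * (y.2 * z₀.1 - y.1 * z₀.2)) ^ 2 / B ^ 2
          ≤ (α * (x.2 * z₀.1 - x.1 * z₀.2) ^ 2 + β * (y.2 * z₀.1 - y.1 * z₀.2) ^ 2) / B ^ 2 := by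
        gcongr
        exact hkey _ _
      have e3 : (α * (x.1 * z₀.1 + x.2 * z₀.2) ^ 2 + β * (y.1 * z₀.1 + y.2 * z₀.2) ^ 2) / L ^ 2
          + (α * (x.2 * z₀.1 - x.1 * z₀.2) ^ 2 + β * (y.2 * z₀.1 - y.1 * z₀.2) ^ 2) / B ^ 2
          = α * ((x.1 * z₀.1 + x.2 * z₀.2) ^ 2 / L ^ 2 + (x.2 * z₀.1 - x.1 * z₀.2) ^ 2 / B ^ 2)
          + β * ((y.1 * z₀.1 + y.2 * z₀.2) ^ 2 / L ^ 2 + (y.2 * z₀.1 - y.1 * z₀.2) ^ 2 / B ^ 2) := by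
        field_simp
        ring
      nlinarith [e1, e2]
  -- smoothness
  have hsmooth : ContDiffOn ℝ (⊤ : ℕ∞) r' Sigma2 := by
    intro z hz
    apply ContDiffAt.contDiffWithinAt
    have hQc : ContDiff ℝ (⊤ : ℕ∞) Q := by
      show ContDiff ℝ (⊤ : ℕ∞) (eQ z₀ L B)
      unfold eQ
      fun_prop (disch := intros; positivity)
    have h1 : ContDiffAt ℝ (⊤ : ℕ∞) (fun p => Real.sqrt (Q p)) z :=
      (Real.contDiffAt_sqrt (hQpos z hz).ne').comp z hQc.contDiffAt
    exact h1.inv (Real.sqrt_pos.2 (hQpos z hz)).ne'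
  refine ⟨Ω', r', ⟨hsmooth, hr'pos, rfl⟩, hconv, ?_, ?_⟩
  · rintro p ⟨z, hz, t, ht0, htr, rfl⟩
    rw [hΩ.2.2]
    exact ⟨z, hz, t, ht0, htr.trans (hle z hz), rfl⟩
  · intro t ht0 htL
    refine ⟨z₀, hz₀, t, ht0, ?_, rfl⟩
    have hQz₀ : Q z₀ = 1 / L ^ 2 := by
      show eQ z₀ L B z₀ = 1 / L ^ 2
      unfold eQ
      have h1 : z₀.1 * z₀.1 + z₀.2 * z₀.2 = 1 := by nlinarith [hz₀u]
      have h2 : z₀.2 * z₀.1 - z₀.1 * z₀.2 = 0 := by ring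
      rw [h1, h2]
      norm_num
    show t ≤ (Real.sqrt (Q z₀))⁻¹
    rw [hQz₀]
    rw [one_div, Real.sqrt_inv, inv_inv, Real.sqrt_sq hL.le]
    exact htL

set_option maxHeartbeats 1600000 in
/-- for `Ω ∈ 𝒮²`, `ε > 0` and `a := max_{(x₁,x₂) ∈ Ω} min(x₁,x₂)`, there exist a
point `q ∈ (ℝ_{≥0})²` with `min(q₁,q₂) ≥ a − ε` and a weakly convex `Ω' ∈ 𝒮²` with
`q ∈ Ω' ⊆ Ω`. -/
theorem stmt12 (Ω : Set Pt) (r : Pt → ℝ) (hΩ : IsToricBase Ω r) (ε : ℝ) (hε : 0 < ε)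
    (a : ℝ) (ha : IsGreatest ((fun p : Pt => min p.1 p.2) '' Ω) a) :
    ∃ (q : Pt) (Ω' : Set Pt) (r' : Pt → ℝ), q ∈ nonnegQuad ∧ a - ε ≤ min q.1 q.2 ∧
      IsToricBase Ω' r' ∧ Convex ℝ Ω' ∧ q ∈ Ω' ∧ Ω' ⊆ Ω := by
  -- Sigma2 is compact
  have hclosed : IsClosed Sigma2 := by
    have hrw : Sigma2 =
        {v : Pt | 0 ≤ v.1} ∩ {v : Pt | 0 ≤ v.2} ∩ {v : Pt | v.1 ^ 2 + v.2 ^ 2 = 1} := by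
      ext v
      simp only [Sigma2, Set.mem_setOf_eq, Set.mem_inter_iff]
      tauto
    rw [hrw]
    exact ((isClosed_le continuous_const continuous_fst).inter
      (isClosed_le continuous_const continuous_snd)).inter
      (isClosed_eq (by fun_prop) continuous_const)
  have hbdd : Bornology.IsBounded Sigma2 := by
    apply (Metric.isBounded_closedBall (x := (0 : Pt)) (r := 1)).subset
    intro v hv
    rw [Metric.mem_closedBall, dist_zero_right, Prod.norm_def]
    have h1 : ‖v.1‖ ≤ 1 := by
      rw [Real.norm_eq_abs, abs_le]
      constructor <;> nlinarith [hv.1, hv.2.1, hv.2.2, sq_nonneg v.1, sq_nonneg v.2]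
    have h2 : ‖v.2‖ ≤ 1 := by
      rw [Real.norm_eq_abs, abs_le]
      constructor <;> nlinarith [hv.1, hv.2.1, hv.2.2, sq_nonneg v.1, sq_nonneg v.2]
    exact max_le h1 h2
  have hcompact : IsCompact Sigma2 := Metric.isCompact_of_isClosed_isBounded hclosed hbdd
  have h10 : ((1 : ℝ), (0 : ℝ)) ∈ Sigma2 := ⟨zero_le_one, le_rfl, by norm_num⟩
  have hne : Sigma2.Nonempty := ⟨((1 : ℝ), (0 : ℝ)), h10⟩
  obtain ⟨zc, hzc, hzc_min⟩ := hcompact.exists_isMinOn hne hΩ.1.continuousOn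
  set c := r zc with hcdef
  have hcpos : 0 < c := hΩ.2.1 zc hzc
  have hc : ∀ z ∈ Sigma2, c ≤ r z := fun z hz => hzc_min hz
  -- the maximizer
  obtain ⟨q', hq'Ω, hq'a⟩ := ha.1
  rw [hΩ.2.2] at hq'Ω
  obtain ⟨z₁, hz₁, t₀, ht₀0, ht₀r, rfl⟩ := hq'Ω
  simp only [Prod.smul_fst, Prod.smul_snd, smul_eq_mul] at hq'a
  have hscale : ∀ s : ℝ, 0 ≤ s → min (s * z₁.1) (s * z₁.2) = s * min z₁.1 z₁.2 := by
    intro s hs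
    rcases le_total z₁.1 z₁.2 with h | h
    · rw [min_eq_left (mul_le_mul_of_nonneg_left h hs), min_eq_left h]
    · rw [min_eq_right (mul_le_mul_of_nonneg_left h hs), min_eq_right h]
  by_cases ht₀ : t₀ = 0
  · -- trivial case : a = 0
    have ha0 : a = 0 := by
      rw [← hq'a, ht₀]
      norm_num
    have hle : ∀ z ∈ Sigma2, eR ((1 : ℝ), (0 : ℝ)) c c z ≤ r z := by
      intro z hz
      have hQ : eQ ((1 : ℝ), (0 : ℝ)) c c z = 1 / c ^ 2 := by
        have h : eQ ((1 : ℝ), (0 : ℝ)) c c z = (z.1 ^ 2 + z.2 ^ 2) / c ^ 2 := by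
          unfold eQ
          ring
        rw [h, hz.2.2]
      show (Real.sqrt (eQ ((1 : ℝ), (0 : ℝ)) c c z))⁻¹ ≤ r z
      rw [hQ, one_div, Real.sqrt_inv, inv_inv, Real.sqrt_sq hcpos.le]
      exact hc z hz
    obtain ⟨Ω', r', htor, hconv, hsub, hmem⟩ :=
      master Ω r hΩ ((1 : ℝ), (0 : ℝ)) h10 c c hcpos hcpos hle
    have h00 : ((0 : ℝ), (0 : ℝ)) = (0 : ℝ) • (((1 : ℝ), (0 : ℝ)) : Pt) := by norm_num
    refine ⟨((0 : ℝ), (0 : ℝ)), Ω', r', ⟨le_rfl, le_rfl⟩, ?_, htor, hconv,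
      h00 ▸ hmem 0 le_rfl hcpos.le, hsub⟩
    simp only [min_self]
    rw [ha0]
    linarith
  · -- main case
    have ht₀pos : 0 < t₀ := lt_of_le_of_ne ht₀0 (Ne.symm ht₀)
    have hz11 : z₁.1 ≤ 1 := by nlinarith [hz₁.2.2, sq_nonneg z₁.2, hz₁.1]
    have ha_eq : a = t₀ * min z₁.1 z₁.2 := by rw [← hq'a, hscale t₀ ht₀0]
    set τ := min ε (t₀ / 2) with hτdef
    have hτpos : 0 < τ := lt_min hε (by linarith)
    have hτε : τ ≤ ε := min_le_left _ _
    have hτt₀ : τ ≤ t₀ / 2 := min_le_right _ _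
    set L := t₀ - τ with hLdef
    have hLpos : 0 < L := by
      rw [hLdef]
      linarith
    have hcw : ContinuousWithinAt r Sigma2 z₁ := hΩ.1.continuousOn.continuousWithinAt hz₁
    obtain ⟨δ, hδpos, hδ⟩ := Metric.continuousWithinAt_iff.1 hcw τ hτpos
    set β := δ / 2 with hβdef
    have hβpos : 0 < β := by positivity
    set B := min (c * β) L with hBdef
    have hBpos : 0 < B := lt_min (by positivity) hLpos
    have hBL : B ≤ L := min_le_right _ _
    have hBcβ : B ≤ c * β := min_le_left _ _
    have hle : ∀ z ∈ Sigma2, eR z₁ L B z ≤ r z := by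
      intro z hz
      set u := z.1 * z₁.1 + z.2 * z₁.2 with hudef
      set v := z.2 * z₁.1 - z.1 * z₁.2 with hvdef
      have huv : u ^ 2 + v ^ 2 = 1 := by
        have h : u ^ 2 + v ^ 2 = (z.1 ^ 2 + z.2 ^ 2) * (z₁.1 ^ 2 + z₁.2 ^ 2) := by
          rw [hudef, hvdef]; ring
        rw [h, hz.2.2, hz₁.2.2, one_mul]
      have hu0 : 0 ≤ u := add_nonneg (mul_nonneg hz.1 hz₁.1) (mul_nonneg hz.2.1 hz₁.2.1)
      have hQz : eQ z₁ L B z = u ^ 2 / L ^ 2 + v ^ 2 / B ^ 2 := rfl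
      show (Real.sqrt (eQ z₁ L B z))⁻¹ ≤ r z
      by_cases hv2 : v ^ 2 ≤ β ^ 2
      · -- z is close to z₁
        have hdist : dist z z₁ < δ := by
          have hu1 : u ≤ 1 := by nlinarith [huv, sq_nonneg v, hu0]
          have hdsum : (z.1 - z₁.1) ^ 2 + (z.2 - z₁.2) ^ 2 = 2 - 2 * u := by
            rw [hudef]
            linear_combination hz.2.2 + hz₁.2.2
          have hd : (z.1 - z₁.1) ^ 2 + (z.2 - z₁.2) ^ 2 ≤ 2 * v ^ 2 := by
            rw [hdsum]
            nlinarith [huv, mul_nonneg hu0 (sub_nonneg.2 hu1)]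
          have hβsq : β ^ 2 = δ ^ 2 / 4 := by rw [hβdef]; ring
          have hδsq : 0 < δ ^ 2 := pow_pos hδpos 2
          rw [Prod.dist_eq]
          have key : ∀ x y : ℝ, (x - y) ^ 2 ≤ 2 * v ^ 2 → dist x y < δ := by
            intro x y hxy
            rw [Real.dist_eq]
            have hsq : |x - y| ^ 2 < δ ^ 2 := by
              rw [sq_abs]
              linarith [hxy, hv2, hβsq, hδsq]
            exact lt_of_pow_lt_pow_left₀ 2 hδpos.le hsq
          exact max_lt (key _ _ (by linarith [hd, sq_nonneg (z.2 - z₁.2)]))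
            (key _ _ (by linarith [hd, sq_nonneg (z.1 - z₁.1)]))
        have hrz : r z₁ - τ < r z := by
          have hh := hδ hz hdist
          rw [Real.dist_eq] at hh
          have := abs_lt.1 hh
          linarith [this.1, this.2]
        have hLr : L ≤ r z := by
          rw [hLdef]
          linarith [ht₀r]
        have hQge : 1 / L ^ 2 ≤ eQ z₁ L B z := by
          have h1 : v ^ 2 / L ^ 2 ≤ v ^ 2 / B ^ 2 :=
            div_le_div_of_nonneg_left (sq_nonneg _) (pow_pos hBpos 2)
              (pow_le_pow_left₀ hBpos.le hBL 2)
          have h2 : u ^ 2 / L ^ 2 + v ^ 2 / L ^ 2 = 1 / L ^ 2 := by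
            rw [← add_div, huv]
          rw [hQz]
          linarith
        have h2 : (1 : ℝ) / L ≤ Real.sqrt (eQ z₁ L B z) := by
          have h := Real.sqrt_le_sqrt hQge
          rwa [one_div, Real.sqrt_inv, Real.sqrt_sq hLpos.le, ← one_div] at h
        calc (Real.sqrt (eQ z₁ L B z))⁻¹ ≤ ((1 : ℝ) / L)⁻¹ :=
              inv_anti₀ (by positivity) h2
          _ = L := by rw [one_div, inv_inv]
          _ ≤ r z := hLr
      · -- z is far from z₁
        push_neg at hv2
        have hQge : 1 / c ^ 2 ≤ eQ z₁ L B z := by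
          have h1 : β ^ 2 / B ^ 2 ≤ v ^ 2 / B ^ 2 :=
            div_le_div_of_nonneg_right hv2.le (pow_pos hBpos 2).le
          have h2 : 1 / c ^ 2 ≤ β ^ 2 / B ^ 2 := by
            rw [div_le_div_iff₀ (by positivity) (pow_pos hBpos 2)]
            have hBsq : B ^ 2 ≤ (c * β) ^ 2 := pow_le_pow_left₀ hBpos.le hBcβ 2
            nlinarith [hBsq]
          have h0 : (0 : ℝ) ≤ u ^ 2 / L ^ 2 := by positivity
          rw [hQz]
          linarith
        have h2 : (1 : ℝ) / c ≤ Real.sqrt (eQ z₁ L B z) := by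
          have h := Real.sqrt_le_sqrt hQge
          rwa [one_div, Real.sqrt_inv, Real.sqrt_sq hcpos.le, ← one_div] at h
        calc (Real.sqrt (eQ z₁ L B z))⁻¹ ≤ ((1 : ℝ) / c)⁻¹ :=
              inv_anti₀ (by positivity) h2
          _ = c := by rw [one_div, inv_inv]
          _ ≤ r z := hc z hz
    obtain ⟨Ω', r', htor, hconv, hsub, hmem⟩ := master Ω r hΩ z₁ hz₁ L B hLpos hBpos hle
    refine ⟨L • z₁, Ω', r', ?_, ?_, htor, hconv, hmem L hLpos.le le_rfl, hsub⟩
    · exact ⟨by simpa using mul_nonneg hLpos.le hz₁.1,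
        by simpa using mul_nonneg hLpos.le hz₁.2.1⟩
    · have hm0 : 0 ≤ min z₁.1 z₁.2 := le_min hz₁.1 hz₁.2.1
      have hm1 : min z₁.1 z₁.2 ≤ 1 := (min_le_left _ _).trans hz11
      simp only [Prod.smul_fst, Prod.smul_snd, smul_eq_mul]
      rw [hscale L hLpos.le]
      have hτm : τ * min z₁.1 z₁.2 ≤ τ := mul_le_of_le_one_right hτpos.le hm1
      rw [ha_eq, hLdef]
      nlinarith [hτm, hτε, hm0]
end
end
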